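/- arXiv:2111.00507 — 4 statements merged into one kernel-verified Lean document; each statement's English description precedes it below -/
import Mathlib

section
/- Every nonempty trace x in a trace monoid M(Σ,I) admits a unique Cartier–Foata normal form: a unique integer k ≥ 1 and a unique sequence (c₁,…,c_k) of nonempty cliques with x = c₁·…·c_k such that each consecutive pair (c_i, c_{i+1}) is normal. -/
namespace TraceDoc

/-- The elementary commutation relation on the free monoid induced by an
independence relation `I`. -/
def traceRel {S : Type*} (I : S → S → Prop) : FreeMonoid S → FreeMonoid S → Prop :=
  fun u v => ∃ a b, I a b ∧ u = FreeMonoid.of a * FreeMonoid.of b ∧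
    v = FreeMonoid.of b * FreeMonoid.of a

/-- The congruence on the free monoid generated by the commutations of `I`. -/
def traceCon {S : Type*} (I : S → S → Prop) : Con (FreeMonoid S) := conGen (traceRel I)

/-- The trace monoid `M(Σ, I)`. -/
abbrev TraceMonoid {S : Type*} (I : S → S → Prop) := (traceCon I).Quotient

/-- Canonical projection from words to traces. -/
def tproj {S : Type*} (I : S → S → Prop) : FreeMonoid S →* TraceMonoid I := (traceCon I).mk'

/-- Image of a letter in the trace monoid. -/
def temb {S : Type*} (I : S → S → Prop) (a : S) : TraceMonoid I := tproj I (FreeMonoid.of a)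

/-- Any monoid hom to a commutative monoid factors through the trace congruence. -/
lemma traceCon_le_ker {S N : Type*} [CommMonoid N] (I : S → S → Prop)
    (f : FreeMonoid S →* N) : traceCon I ≤ Con.ker f := by
  apply Con.conGen_le.2
  rintro u v ⟨a, b, _, rfl, rfl⟩
  simp [Con.ker_rel, map_mul, mul_comm]

/-- Length of a trace (well defined since commutations preserve length). -/
def tlen {S : Type*} (I : S → S → Prop) : TraceMonoid I → ℕ := fun x =>
  Multiplicative.toAdd
    (Con.lift _ (FreeMonoid.lift fun _ : S => Multiplicative.ofAdd (1 : ℕ))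
      (traceCon_le_ker I _) x)

/-- Number of occurrences of the letter `a` in a trace (well defined). -/
def tcount {S : Type*} [DecidableEq S] (I : S → S → Prop) (a : S) : TraceMonoid I → ℕ := fun x =>
  Multiplicative.toAdd
    (Con.lift _ (FreeMonoid.lift fun b : S =>
        Multiplicative.ofAdd (if b = a then (1 : ℕ) else 0))
      (traceCon_le_ker I _) x)

/-- Left divisibility in a trace monoid. -/
def tle {S : Type*} (I : S → S → Prop) (x y : TraceMonoid I) : Prop := ∃ z, y = x * z

/-- A clique: a finite set of pairwise independent letters. -/
def IsClique {S : Type*} (I : S → S → Prop) (s : Finset S) : Prop := (↑s : Set S).Pairwise I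

/-- The type of cliques of the trace monoid. -/
abbrev Clique {S : Type*} (I : S → S → Prop) := {s : Finset S // IsClique I s}

lemma temb_commute {S : Type*} {I : S → S → Prop} {a b : S} (h : I a b) :
    Commute (temb I a) (temb I b) := by
  have : (traceCon I) (FreeMonoid.of a * FreeMonoid.of b) (FreeMonoid.of b * FreeMonoid.of a) :=
    ConGen.Rel.of _ _ ⟨a, b, h, rfl, rfl⟩
  simpa [Commute, SemiconjBy, temb, tproj, ← map_mul] using (traceCon I).eq.2 this

/-- The product of a clique in the trace monoid. -/
def cprod {S : Type*} (I : S → S → Prop) (c : Clique I) : TraceMonoid I :=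
  c.1.noncommProd (temb I) (fun a ha b hb hab => temb_commute (c.2 ha hb hab))

/-- The Cartier–Foata normality relation `c → d` between cliques. -/
def NormalPair {S : Type*} (I : S → S → Prop) (c d : Clique I) : Prop :=
  ∀ b ∈ d.1, ∃ a ∈ c.1, ¬ I a b

/-- A concurrent system: a right action of the trace monoid on the states
`X` together with a sink `⊥` (modelled by `none`). -/
structure ConcurrentSystem {S : Type*} (I : S → S → Prop) (X : Type*) where
  act : Option X → TraceMonoid I → Option X
  act_one : ∀ α, act α 1 = α
  act_mul : ∀ α x y, act α (x * y) = act (act α x) y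
  act_bot : ∀ x, act none x = none

/-- The set `M_α` of executions from state `α`. -/
def ConcurrentSystem.execs {S : Type*} {I : S → S → Prop} {X : Type*}
    (C : ConcurrentSystem I X) (α : X) : Set (TraceMonoid I) :=
  {x | C.act (some α) x ≠ none}

end TraceDoc
namespace CF

open TraceDoc

attribute [local instance 10] Classical.propDecidable

variable {S : Type*} (I : S → S → Prop)

/-- `a` is independent of every letter of `c`. -/
def Indep (a : S) (c : Finset S) : Prop := ∀ b ∈ c, I a b

/-- Bubble a letter into a reversed list of cliques (head = last clique). -/
noncomputable def bub (a : S) : List (Finset S) → List (Finset S)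
  | [] => []
  | [c] => [insert a c]
  | c :: d :: t => if Indep I a d then c :: bub a (d :: t) else (insert a c) :: d :: t

/-- Insert a letter at the end of a reversed list of cliques. -/
noncomputable def ins : List (Finset S) → S → List (Finset S)
  | [], a => [{a}]
  | c :: t, a => if Indep I a c then bub I a (c :: t) else {a} :: c :: t

/-- Foata normal form (reversed) of a word. -/
noncomputable def nf (w : List S) : List (Finset S) := w.foldl (ins I) []

variable {I}

lemma indep_insert {a b : S} {c : Finset S} :
    Indep I a (insert b c) ↔ I a b ∧ Indep I a c := by
  simp [Indep, Finset.forall_mem_insert]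

lemma not_indep_insert {a b : S} {c : Finset S} (h : ¬ Indep I a c) :
    ¬ Indep I a (insert b c) := fun h' => h (indep_insert.1 h').2

lemma bub_shape (a : S) (c : Finset S) (t : List (Finset S)) :
    bub I a (c :: t) = insert a c :: t ∨ ∃ t', bub I a (c :: t) = c :: t' := by
  cases t with
  | nil => exact Or.inl rfl
  | cons d t =>
    by_cases h : Indep I a d
    · exact Or.inr ⟨bub I a (d :: t), by simp [bub, h]⟩
    · exact Or.inl (by simp [bub, h])

lemma bub_swap {a b : S} (hab : I a b) (hba : I b a) :
    ∀ (t : List (Finset S)) (c : Finset S), Indep I a c → Indep I b c →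
      bub I b (bub I a (c :: t)) = bub I a (bub I b (c :: t)) := by
  intro t
  induction t with
  | nil =>
    intro c _ _
    simp [bub, Finset.insert_comm]
  | cons d t ih =>
    intro c hac hbc
    by_cases had : Indep I a d <;> by_cases hbd : Indep I b d
    · -- both independent of d
      rw [show bub I a (c :: d :: t) = c :: bub I a (d :: t) by simp [bub, had],
        show bub I b (c :: d :: t) = c :: bub I b (d :: t) by simp [bub, hbd]]
      rcases bub_shape a d t with h | ⟨t', h⟩ <;>
        rcases bub_shape b d t with h2 | ⟨t2', h2⟩
      · rw [h, h2]
        rw [show bub I b (c :: insert a d :: t) = c :: bub I b (insert a d :: t) by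
            simp [bub, indep_insert.2 ⟨hba, hbd⟩],
          show bub I a (c :: insert b d :: t) = c :: bub I a (insert b d :: t) by
            simp [bub, indep_insert.2 ⟨hab, had⟩], ← h, ← h2]
        exact congrArg _ (ih d had hbd)
      · rw [h, h2]
        rw [show bub I b (c :: insert a d :: t) = c :: bub I b (insert a d :: t) by
            simp [bub, indep_insert.2 ⟨hba, hbd⟩],
          show bub I a (c :: d :: t2') = c :: bub I a (d :: t2') by simp [bub, had],
          ← h, ← h2]
        exact congrArg _ (ih d had hbd)
      · rw [h, h2]
        rw [show bub I b (c :: d :: t') = c :: bub I b (d :: t') by simp [bub, hbd],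
          show bub I a (c :: insert b d :: t) = c :: bub I a (insert b d :: t) by
            simp [bub, indep_insert.2 ⟨hab, had⟩], ← h, ← h2]
        exact congrArg _ (ih d had hbd)
      · rw [h, h2]
        rw [show bub I b (c :: d :: t') = c :: bub I b (d :: t') by simp [bub, hbd],
          show bub I a (c :: d :: t2') = c :: bub I a (d :: t2') by simp [bub, had],
          ← h, ← h2]
        exact congrArg _ (ih d had hbd)
    · -- a indep of d, b not
      rw [show bub I a (c :: d :: t) = c :: bub I a (d :: t) by simp [bub, had],
        show bub I b (c :: d :: t) = insert b c :: d :: t by simp [bub, hbd]]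
      rcases bub_shape a d t with h | ⟨t', h⟩
      · rw [h, show bub I b (c :: insert a d :: t) = insert b c :: insert a d :: t by
          simp [bub, not_indep_insert hbd], show bub I a (insert b c :: d :: t)
            = insert b c :: bub I a (d :: t) by simp [bub, had], h]
      · rw [h, show bub I b (c :: d :: t') = insert b c :: d :: t' by simp [bub, hbd],
          show bub I a (insert b c :: d :: t) = insert b c :: bub I a (d :: t) by
            simp [bub, had], h]
    · -- b indep of d, a not
      rw [show bub I b (c :: d :: t) = c :: bub I b (d :: t) by simp [bub, hbd],
        show bub I a (c :: d :: t) = insert a c :: d :: t by simp [bub, had]]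
      rcases bub_shape b d t with h | ⟨t', h⟩
      · rw [h, show bub I a (c :: insert b d :: t) = insert a c :: insert b d :: t by
          simp [bub, not_indep_insert had], show bub I b (insert a c :: d :: t)
            = insert a c :: bub I b (d :: t) by simp [bub, hbd], h]
      · rw [h, show bub I a (c :: d :: t') = insert a c :: d :: t' by simp [bub, had],
          show bub I b (insert a c :: d :: t) = insert a c :: bub I b (d :: t) by
            simp [bub, hbd], h]
    · -- neither indep of d
      rw [show bub I a (c :: d :: t) = insert a c :: d :: t by simp [bub, had],
        show bub I b (c :: d :: t) = insert b c :: d :: t by simp [bub, hbd],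
        show bub I b (insert a c :: d :: t) = insert b (insert a c) :: d :: t by
          simp [bub, hbd],
        show bub I a (insert b c :: d :: t) = insert a (insert b c) :: d :: t by
          simp [bub, had], Finset.insert_comm]


lemma indep_singleton {a b : S} : Indep I a ({b} : Finset S) ↔ I a b := by
  simp [Indep]

lemma ins_swap {a b : S} (hab : I a b) (hba : I b a) (l : List (Finset S)) :
    ins I (ins I l a) b = ins I (ins I l b) a := by
  cases l with
  | nil =>
    simp [ins, indep_singleton, hab, hba, bub]
    exact Finset.pair_comm b a
  | cons c t =>
    by_cases hac : Indep I a c <;> by_cases hbc : Indep I b c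
    · -- both indep of c
      rw [show ins I (c :: t) a = bub I a (c :: t) by simp [ins, hac],
        show ins I (c :: t) b = bub I b (c :: t) by simp [ins, hbc]]
      rcases bub_shape a c t with h | ⟨t', h⟩ <;>
        rcases bub_shape b c t with h2 | ⟨t2', h2⟩ <;>
        rw [h, h2] <;>
        rw [show ∀ e t'', Indep I b e → ins I (e :: t'') b = bub I b (e :: t'') from
            fun e t'' he => by simp [ins, he],
          show ∀ e t'', Indep I a e → ins I (e :: t'') a = bub I a (e :: t'') from
            fun e t'' he => by simp [ins, he], ← h, ← h2] <;>
        first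
          | exact bub_swap hab hba t c hac hbc
          | exact indep_insert.2 ⟨hab, hac⟩
          | exact indep_insert.2 ⟨hba, hbc⟩
          | exact hac
          | exact hbc
    · -- a indep, b not
      rw [show ins I (c :: t) a = bub I a (c :: t) by simp [ins, hac],
        show ins I (c :: t) b = {b} :: c :: t by simp [ins, hbc],
        show ins I ({b} :: c :: t) a = bub I a ({b} :: c :: t) by
          simp [ins, indep_singleton, hab],
        show bub I a ({b} :: c :: t) = {b} :: bub I a (c :: t) by simp [bub, hac]]
      rcases bub_shape a c t with h | ⟨t', h⟩ <;> rw [h]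
      · rw [show ins I (insert a c :: t) b = {b} :: insert a c :: t by
          simp [ins, not_indep_insert hbc]]
      · rw [show ins I (c :: t') b = {b} :: c :: t' by simp [ins, hbc]]
    · -- b indep, a not
      rw [show ins I (c :: t) b = bub I b (c :: t) by simp [ins, hbc],
        show ins I (c :: t) a = {a} :: c :: t by simp [ins, hac],
        show ins I ({a} :: c :: t) b = bub I b ({a} :: c :: t) by
          simp [ins, indep_singleton, hba],
        show bub I b ({a} :: c :: t) = {a} :: bub I b (c :: t) by simp [bub, hbc]]
      rcases bub_shape b c t with h | ⟨t', h⟩ <;> rw [h]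
      · rw [show ins I (insert b c :: t) a = {a} :: insert b c :: t by
          simp [ins, not_indep_insert hac]]
      · rw [show ins I (c :: t') a = {a} :: c :: t' by simp [ins, hac]]
    · -- neither
      rw [show ins I (c :: t) a = {a} :: c :: t by simp [ins, hac],
        show ins I (c :: t) b = {b} :: c :: t by simp [ins, hbc],
        show ins I ({a} :: c :: t) b = bub I b ({a} :: c :: t) by
          simp [ins, indep_singleton, hba],
        show ins I ({b} :: c :: t) a = bub I a ({b} :: c :: t) by
          simp [ins, indep_singleton, hab],
        show bub I b ({a} :: c :: t) = insert b {a} :: c :: t by simp [bub, hbc],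
        show bub I a ({b} :: c :: t) = insert a {b} :: c :: t by simp [bub, hac]]
      rw [show insert b ({a} : Finset S) = insert a {b} from Finset.pair_comm b a]
lemma foldl_ins_eq (hsym : Symmetric I) {u v : FreeMonoid S} (h : traceCon I u v) :
    ∀ l : List (Finset S),
      List.foldl (ins I) l (FreeMonoid.toList u) = List.foldl (ins I) l (FreeMonoid.toList v) := by
  induction h with
  | of u v huv =>
    obtain ⟨a, b, hab, rfl, rfl⟩ := huv
    intro l
    show List.foldl (ins I) l [a, b] = List.foldl (ins I) l [b, a]
    simpa using ins_swap hab (hsym hab) l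
  | refl => intro l; rfl
  | symm _ ih => intro l; exact (ih l).symm
  | trans _ _ ih1 ih2 => intro l; exact (ih1 l).trans (ih2 l)
  | mul h1 h2 ih1 ih2 =>
    intro l
    rw [FreeMonoid.toList_mul, FreeMonoid.toList_mul, List.foldl_append, List.foldl_append,
      ih1 l, ih2]

variable (I)

/-- Product of a finite set of letters in the trace monoid, via its `toList`. -/
noncomputable def fp (c : Finset S) : TraceMonoid I := (c.toList.map (temb I)).prod

/-- Product of a reversed list of cliques. -/
noncomputable def tpRev (l : List (Finset S)) : TraceMonoid I :=
  (l.reverse.map (fp I)).prod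

variable {I}

lemma tpRev_nil : tpRev I ([] : List (Finset S)) = 1 := rfl

lemma tpRev_cons (c : Finset S) (t : List (Finset S)) :
    tpRev I (c :: t) = tpRev I t * fp I c := by
  simp [tpRev]

lemma commute_fp {a : S} {c : Finset S} (h : Indep I a c) :
    Commute (temb I a) (fp I c) := by
  apply Commute.list_prod_right
  intro y hy
  simp only [List.mem_map] at hy
  obtain ⟨b, hb, rfl⟩ := hy
  exact temb_commute (h b (Finset.mem_toList.1 hb))

lemma pairwise_commute_toList {c : Finset S} (hc : IsClique I c) :
    (c.toList.map (temb I)).Pairwise Commute := by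
  have h1 : c.toList.Pairwise I := by
    refine (Finset.nodup_toList c).imp_of_mem ?_
    intro x y hx hy hxy
    exact hc (Finset.mem_toList.1 hx) (Finset.mem_toList.1 hy) hxy
  exact h1.map _ (fun a b h => temb_commute h)

lemma fp_insert (hirr : ∀ a, ¬ I a a) {a : S} {c : Finset S}
    (hac : Indep I a c) (hc : IsClique I c) :
    fp I (insert a c) = temb I a * fp I c := by
  have hmem : a ∉ c := fun h => hirr a (hac a h)
  have hperm : List.Perm ((insert a c).toList.map (temb I)) ((a :: c.toList).map (temb I)) :=
    (Finset.toList_insert hmem).map _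
  have hpair : ((a :: c.toList).map (temb I)).Pairwise Commute := by
    rw [List.map_cons]
    refine List.Pairwise.cons ?_ (pairwise_commute_toList hc)
    intro y hy
    simp only [List.mem_map] at hy
    obtain ⟨b, hb, rfl⟩ := hy
    exact temb_commute (hac b (Finset.mem_toList.1 hb))
  rw [show fp I (insert a c) = ((insert a c).toList.map (temb I)).prod from rfl,
    hperm.prod_eq' (hpair.perm hperm.symm fun h => h.symm)]
  simp [fp]

lemma fp_insert' (hirr : ∀ a, ¬ I a a) {a : S} {c : Finset S}
    (hac : Indep I a c) (hc : IsClique I c) :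
    fp I (insert a c) = fp I c * temb I a := by
  rw [fp_insert hirr hac hc, (commute_fp hac).eq]

lemma clique_insert (hsym : Symmetric I) {a : S} {c : Finset S}
    (hac : Indep I a c) (hc : IsClique I c) : IsClique I (insert a c) := by
  intro x hx y hy hxy
  simp only [Finset.coe_insert, Set.mem_insert_iff, Finset.mem_coe] at hx hy
  rcases hx with rfl | hx <;> rcases hy with rfl | hy
  · exact absurd rfl hxy
  · exact hac y hy
  · exact hsym (hac x hx)
  · exact hc hx hy hxy
variable (I)

/-- Normality on underlying finsets. -/
def NP (c d : Finset S) : Prop := ∀ b ∈ d, ∃ a ∈ c, ¬ I a b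

/-- Reversed normality (for reversed lists of cliques). -/
def RNP (x y : Finset S) : Prop := NP I y x

/-- Invariant maintained by the insertion algorithm. -/
def Good (l : List (Finset S)) : Prop :=
  (∀ c ∈ l, c.Nonempty) ∧ (∀ c ∈ l, IsClique I c) ∧ List.Chain' (RNP I) l

variable {I}

lemma not_indep_iff {a : S} {c : Finset S} :
    ¬ Indep I a c ↔ ∃ b ∈ c, ¬ I a b := by
  simp [Indep]

lemma np_mono {c d e : Finset S} (h : NP I c d) (hce : c ⊆ e) : NP I e d :=
  fun b hb => (h b hb).imp fun a ha => ⟨hce ha.1, ha.2⟩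

lemma bub_good (hsym : Symmetric I) (hirr : ∀ a, ¬ I a a) {a : S} :
    ∀ (t : List (Finset S)) (c : Finset S), Indep I a c → Good I (c :: t) →
      Good I (bub I a (c :: t)) ∧
        tpRev I (bub I a (c :: t)) = tpRev I (c :: t) * temb I a := by
  intro t
  induction t with
  | nil =>
    intro c hac ⟨hne, hcl, _⟩
    have hc : IsClique I c := hcl c (by simp)
    refine ⟨⟨?_, ?_, ?_⟩, ?_⟩
    · intro x hx; simp only [bub, List.mem_singleton] at hx; subst hx
      exact Finset.insert_nonempty _ _
    · intro x hx; simp only [bub, List.mem_singleton] at hx; subst hx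
      exact clique_insert hsym hac hc
    · simp [bub]; exact List.isChain_singleton _
    · show tpRev I [insert a c] = tpRev I [c] * temb I a
      simp [tpRev_cons, tpRev_nil, fp_insert' hirr hac hc]
  | cons d t ih =>
    intro c hac ⟨hne, hcl, hch⟩
    have hc : IsClique I c := hcl c (by simp)
    have hgood' : Good I (d :: t) :=
      ⟨fun x hx => hne x (by simp [hx]), fun x hx => hcl x (by simp [hx]),
        (List.isChain_cons_cons.1 hch).2⟩
    have hnpdc : NP I d c := (List.isChain_cons_cons.1 hch).1
    by_cases had : Indep I a d
    · obtain ⟨⟨hne', hcl', hch'⟩, hprod⟩ := ih d had hgood'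
      rw [show bub I a (c :: d :: t) = c :: bub I a (d :: t) by simp [bub, had]]
      refine ⟨⟨?_, ?_, ?_⟩, ?_⟩
      · intro x hx
        rcases List.mem_cons.1 hx with rfl | hx
        · exact hne x (by simp)
        · exact hne' x hx
      · intro x hx
        rcases List.mem_cons.1 hx with rfl | hx
        · exact hc
        · exact hcl' x hx
      · rcases bub_shape a d t with h | ⟨t', h⟩ <;> rw [h] <;> rw [h] at hch'
        · exact List.isChain_cons_cons.2 ⟨np_mono hnpdc (Finset.subset_insert a d), hch'⟩
        · exact List.isChain_cons_cons.2 ⟨hnpdc, hch'⟩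
      · rw [tpRev_cons, hprod]
        simp only [tpRev_cons, mul_assoc]
        rw [(commute_fp hac).eq]
    · rw [show bub I a (c :: d :: t) = insert a c :: d :: t by simp [bub, had]]
      refine ⟨⟨?_, ?_, ?_⟩, ?_⟩
      · intro x hx
        rcases List.mem_cons.1 hx with rfl | hx
        · exact Finset.insert_nonempty _ _
        · exact hne x (by simp [hx])
      · intro x hx
        rcases List.mem_cons.1 hx with rfl | hx
        · exact clique_insert hsym hac hc
        · exact hcl x (by simp [hx])
      · refine List.isChain_cons_cons.2 ⟨?_, (List.isChain_cons_cons.1 hch).2⟩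
        intro b hb
        rcases Finset.mem_insert.1 hb with rfl | hb
        · obtain ⟨z, hz, hnz⟩ := not_indep_iff.1 had
          exact ⟨z, hz, fun h => hnz (hsym h)⟩
        · exact hnpdc b hb
      · simp only [tpRev_cons, fp_insert' hirr hac hc, mul_assoc]

lemma ins_good (hsym : Symmetric I) (hirr : ∀ a, ¬ I a a) (a : S)
    (l : List (Finset S)) (hl : Good I l) :
    Good I (ins I l a) ∧ tpRev I (ins I l a) = tpRev I l * temb I a := by
  cases l with
  | nil =>
    refine ⟨⟨?_, ?_, ?_⟩, ?_⟩
    · intro x hx; simp only [ins, List.mem_singleton] at hx; subst hx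
      exact Finset.singleton_nonempty a
    · intro x hx; simp only [ins, List.mem_singleton] at hx; subst hx
      intro u hu v hv huv
      simp only [Finset.coe_singleton, Set.mem_singleton_iff] at hu hv
      exact absurd (hu.trans hv.symm) huv
    · simp [ins]; exact List.isChain_singleton _
    · show tpRev I [{a}] = tpRev I [] * temb I a
      simp [tpRev_cons, tpRev_nil, fp, Finset.toList_singleton]
  | cons c t =>
    by_cases hac : Indep I a c
    · rw [show ins I (c :: t) a = bub I a (c :: t) by simp [ins, hac]]
      exact bub_good hsym hirr t c hac hl
    · obtain ⟨hne, hcl, hch⟩ := hl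
      rw [show ins I (c :: t) a = {a} :: c :: t by simp [ins, hac]]
      refine ⟨⟨?_, ?_, ?_⟩, ?_⟩
      · intro x hx
        rcases List.mem_cons.1 hx with rfl | hx
        · exact Finset.singleton_nonempty a
        · exact hne x hx
      · intro x hx
        rcases List.mem_cons.1 hx with rfl | hx
        · intro u hu v hv huv
          simp only [Finset.coe_singleton, Set.mem_singleton_iff] at hu hv
          exact absurd (hu.trans hv.symm) huv
        · exact hcl x hx
      · refine List.isChain_cons_cons.2 ⟨?_, hch⟩
        intro b hb
        rcases Finset.mem_singleton.1 hb with rfl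
        obtain ⟨z, hz, hnz⟩ := not_indep_iff.1 hac
        exact ⟨z, hz, fun h => hnz (hsym h)⟩
      · rw [tpRev_cons]
        congr 1
        simp [fp, Finset.toList_singleton]

lemma foldl_good (hsym : Symmetric I) (hirr : ∀ a, ¬ I a a) :
    ∀ (w : List S) (l : List (Finset S)), Good I l →
      Good I (List.foldl (ins I) l w) ∧
        tpRev I (List.foldl (ins I) l w) = tpRev I l * (w.map (temb I)).prod := by
  intro w
  induction w with
  | nil => intro l hl; exact ⟨hl, by simp⟩
  | cons a w ih =>
    intro l hl
    obtain ⟨hg, hp⟩ := ins_good hsym hirr a l hl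
    obtain ⟨hg', hp'⟩ := ih (ins I l a) hg
    refine ⟨hg', ?_⟩
    rw [List.foldl_cons] at *
    rw [hp', hp, List.map_cons, List.prod_cons, mul_assoc]
lemma stepFold :
    ∀ (u : List S) (s : Finset S) (acc : List (Finset S)),
      (∀ x ∈ u, Indep I x s) → List.Pairwise (fun x y => I y x) u →
      (∀ h rest, acc = h :: rest → ∀ x ∈ u, ¬ Indep I x h) →
      List.foldl (ins I) (s :: acc) u = (s ∪ u.toFinset) :: acc := by
  intro u
  induction u with
  | nil => intro s acc _ _ _; simp
  | cons a u ih =>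
    intro s acc hind hpw hacc
    have has : Indep I a s := hind a (by simp)
    have h1 : ins I (s :: acc) a = insert a s :: acc := by
      cases acc with
      | nil => simp [ins, has, bub]
      | cons h rest =>
        have hnah : ¬ Indep I a h := hacc h rest rfl a (by simp)
        simp [ins, has, bub, hnah]
    rw [List.foldl_cons, h1, ih (insert a s) acc
      (fun x hx => indep_insert.2 ⟨(List.pairwise_cons.1 hpw).1 x hx, hind x (by simp [hx])⟩)
      (List.pairwise_cons.1 hpw).2
      (fun h rest hrest x hx => hacc h rest hrest x (by simp [hx]))]
    congr 1
    ext y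
    simp [Finset.mem_union, Finset.mem_insert, or_assoc]

lemma cliqueFold (c : Finset S) (hc : IsClique I c) (hne : c.Nonempty)
    (acc : List (Finset S))
    (hacc : ∀ h rest, acc = h :: rest → ∀ x ∈ c, ¬ Indep I x h) :
    List.foldl (ins I) acc c.toList = c :: acc := by
  obtain ⟨a, u, hau⟩ : ∃ a u, c.toList = a :: u := by
    cases h : c.toList with
    | nil => exact absurd (Finset.toList_eq_nil.1 h) hne.ne_empty
    | cons a u => exact ⟨a, u, rfl⟩
  have hmem : ∀ x ∈ a :: u, x ∈ c := by
    intro x hx; rw [← Finset.mem_toList, hau]; exact hx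
  have hnd : (a :: u).Nodup := hau ▸ Finset.nodup_toList c
  have h1 : ins I acc a = {a} :: acc := by
    cases acc with
    | nil => rfl
    | cons h rest =>
      have : ¬ Indep I a h := hacc h rest rfl a (hmem a (by simp))
      simp [ins, this]
  rw [hau, List.foldl_cons, h1, stepFold u {a} acc
    (fun x hx => indep_singleton.2 (hc (hmem x (by simp [hx])) (hmem a (by simp))
      (fun he => (List.nodup_cons.1 hnd).1 (he ▸ hx))))
    ((List.nodup_cons.1 hnd).2.imp_of_mem (fun {x y} hx hy hxy =>
      hc (hmem y (by simp [hy])) (hmem x (by simp [hx])) (Ne.symm hxy)))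
    (fun h rest hrest x hx => hacc h rest hrest x (hmem x (by simp [hx])))]
  congr 1
  have : c = (a :: u).toFinset := by rw [← hau, Finset.toList_toFinset]
  rw [this]
  ext y
  simp [or_assoc]

lemma chainFold (hsym : Symmetric I) :
    ∀ (L : List (Finset S)) (acc : List (Finset S)),
      (∀ c ∈ L, c.Nonempty ∧ IsClique I c) → List.Chain' (NP I) L →
      (∀ h rest c L', acc = h :: rest → L = c :: L' → ∀ x ∈ c, ¬ Indep I x h) →
      List.foldl (ins I) acc (L.map Finset.toList).flatten = L.reverse ++ acc := by
  intro L
  induction L with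
  | nil => intro acc _ _ _; simp
  | cons c L ih =>
    intro acc hprops hch hacc
    rw [List.map_cons, List.flatten_cons, List.foldl_append,
      cliqueFold c (hprops c (by simp)).2 (hprops c (by simp)).1 acc
        (fun h rest hrest x hx => hacc h rest c L hrest rfl x hx),
      ih (c :: acc) (fun d hd => hprops d (by simp [hd])) (List.isChain_cons.1 hch).2
        ?_]
    · simp
    · rintro h rest d L' hrest rfl x hx hxind
      injection hrest with h1 h2
      subst h1
      obtain ⟨z, hz, hnz⟩ := (List.isChain_cons_cons.1 hch).1 x hx
      exact hnz (hsym (hxind z hz))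
lemma cprod_eq_fp (hirr : ∀ a, ¬ I a a) {c : Finset S} (h : IsClique I c) :
    cprod I ⟨c, h⟩ = fp I c := by
  induction c using Finset.induction_on with
  | empty => simp [cprod, fp, Finset.noncommProd_empty]; rfl
  | @insert a s ha ih =>
    have hsub : (↑s : Set S) ⊆ ↑(insert a s) := by
      intro x hx; simp only [Finset.coe_insert, Set.mem_insert_iff]; right; exact hx
    have hs : IsClique I s := h.mono hsub
    have hind : Indep I a s := by
      intro b hb
      refine h (by simp) (by simp [hb]) ?_
      rintro rfl; exact ha hb
    rw [fp_insert hirr hind hs]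
    show Finset.noncommProd (insert a s) (temb I) _ = _
    exact (Finset.noncommProd_insert_of_notMem _ _ _ _ ha).trans (congrArg _ (ih hs))

lemma tproj_ofList (w : List S) :
    tproj I (FreeMonoid.ofList w) = (w.map (temb I)).prod := by
  induction w with
  | nil => simp [show FreeMonoid.ofList ([] : List S) = 1 from rfl]
  | cons a w ih =>
    rw [FreeMonoid.ofList_cons, map_mul, ih, List.map_cons, List.prod_cons]
    rfl

lemma flatten_prod : ∀ L : List (Finset S),
    ((L.map Finset.toList).flatten.map (temb I)).prod = (L.map (fp I)).prod := by
  intro L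
  induction L with
  | nil => simp
  | cons c L ih =>
    simp only [List.map_cons, List.flatten_cons, List.map_append, List.prod_append,
      List.prod_cons, ih]
    rfl

end CF

open TraceDoc CF in
theorem stmt3' {S : Type*} [Fintype S] (I : S → S → Prop)
    (hsym : Symmetric I) (hirr : ∀ a, ¬ I a a) :
    ∀ x : TraceMonoid I, x ≠ 1 →
      ∃! l : List (Clique I), l ≠ [] ∧ (∀ c ∈ l, c.1.Nonempty) ∧
        List.Chain' (NormalPair I) l ∧ (l.map (cprod I)).prod = x := by
  intro x hx
  obtain ⟨u, rfl⟩ : ∃ u, tproj I u = x := Con.mk'_surjective x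
  have hgood := foldl_good hsym hirr u.toList [] ⟨by simp, by simp, by exact List.isChain_nil⟩
  set L : List (Finset S) := List.foldl (ins I) [] u.toList with hLdef
  have hprod_u : (u.toList.map (temb I)).prod = tproj I u := by
    rw [← tproj_ofList, FreeMonoid.ofList_toList]
  have hL1 : Good I L := hgood.1
  have hL2 : tpRev I L = tproj I u := by
    rw [hgood.2, tpRev_nil, one_mul, hprod_u]
  have hLne : L ≠ [] := by
    intro h
    exact hx (by rw [← hL2, h, tpRev_nil])
  have hcl : ∀ c ∈ L.reverse, IsClique I c := fun c hc => hL1.2.1 c (List.mem_reverse.1 hc)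
  set l₀ : List (Clique I) := List.pmap (fun c h => (⟨c, h⟩ : Clique I)) L.reverse hcl
    with hl₀def
  have hval : l₀.map Subtype.val = L.reverse := by
    rw [hl₀def, List.map_pmap]
    simp
  have hne₀ : l₀ ≠ [] := by
    intro h
    apply hLne
    have := congrArg List.length hval
    rw [h] at this
    simpa using this.symm
  have hnonempty₀ : ∀ c ∈ l₀, c.1.Nonempty := by
    intro c hc
    rw [hl₀def, List.mem_pmap] at hc
    obtain ⟨a, ha, rfl⟩ := hc
    exact hL1.1 a (List.mem_reverse.1 ha)
  have hchain₀ : List.Chain' (NormalPair I) l₀ := by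
    have h1 : List.Chain' (NP I) (l₀.map Subtype.val) := by
      rw [hval]
      exact List.isChain_reverse.2 hL1.2.2
    exact (List.isChain_map Subtype.val).1 h1
  have hprodmap : ∀ (m : List (Clique I)), m.map (cprod I) = (m.map Subtype.val).map (fp I) := by
    intro m
    rw [List.map_map]
    apply List.map_congr_left
    intro c _
    exact cprod_eq_fp hirr c.2
  have hprod₀ : (l₀.map (cprod I)).prod = tproj I u := by
    rw [hprodmap, hval]
    exact hL2
  refine ⟨l₀, ⟨hne₀, hnonempty₀, hchain₀, hprod₀⟩, ?_⟩
  rintro l' ⟨hne', hnonempty', hchain', hprod'⟩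
  apply List.map_injective_iff.2 Subtype.val_injective
  rw [hval]
  set L' : List (Finset S) := l'.map Subtype.val with hL'def
  set w' : List S := (L'.map Finset.toList).flatten with hw'def
  have h1 : List.foldl (ins I) [] w' = L'.reverse := by
    have := chainFold hsym L' []
      (by
        intro c hc
        rw [hL'def, List.mem_map] at hc
        obtain ⟨d, hd, rfl⟩ := hc
        exact ⟨hnonempty' d hd, d.2⟩)
      ((List.isChain_map Subtype.val).2 hchain')
      (by rintro h rest c L'' h' _ x hx; cases h')
    simpa using this
  have h2 : tproj I (FreeMonoid.ofList w') = tproj I u := by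
    rw [tproj_ofList, hw'def, flatten_prod, ← hprodmap, hprod']
  have h3 : traceCon I (FreeMonoid.ofList w') u := (traceCon I).eq.1 h2
  have h4 : List.foldl (ins I) [] w' = L := by
    have := foldl_ins_eq hsym h3 []
    rw [FreeMonoid.toList_ofList] at this
    exact this
  rw [h4] at h1
  rw [h1, List.reverse_reverse]

open TraceDoc in
/-- Existence and uniqueness of the Cartier–Foata normal form: every nonempty
trace is uniquely a product of a nonempty sequence of nonempty cliques, each
consecutive pair being normal. -/
theorem stmt3 {S : Type*} [Fintype S] (I : S → S → Prop)
    (hsym : Symmetric I) (hirr : ∀ a, ¬ I a a) :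
    ∀ x : TraceMonoid I, x ≠ 1 →
      ∃! l : List (Clique I), l ≠ [] ∧ (∀ c ∈ l, c.1.Nonempty) ∧
        List.Chain' (NormalPair I) l ∧ (l.map (cprod I)).prod = x := by
  exact stmt3' I hsym hirr
end

section
/- The growth series G(z) = Σ_{x ∈ M} z^{|x|} of a trace monoid M(Σ,I) is the formal inverse of its Möbius polynomial μ(z) = Σ_{c ∈ 𝒞} (−1)^{|c|} z^{|c|}, i.e., G(z)·μ(z) = 1 as formal power series. -/
namespace TraceDoc

open List

section Words

variable {S : Type*} [DecidableEq S] {I : S → S → Prop}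

/-- Projection of a word to the letters `a`, `b`. -/
def wproj (a b : S) (l : List S) : List S := l.filter (fun c => c = a ∨ c = b)

lemma wproj_append (a b : S) (u v : List S) :
    wproj a b (u ++ v) = wproj a b u ++ wproj a b v := by
  simp [wproj]

lemma wproj_cons (a b c : S) (l : List S) :
    wproj a b (c :: l) = if c = a ∨ c = b then c :: wproj a b l else wproj a b l := by
  by_cases h : c = a ∨ c = b <;> simp [wproj, List.filter_cons, h]

lemma mem_wproj {a b c : S} {l : List S} :
    c ∈ wproj a b l ↔ c ∈ l ∧ (c = a ∨ c = b) := by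
  simp [wproj]

/-- The invariants characterizing trace equivalence of words. -/
def WEq (I : S → S → Prop) (u v : List S) : Prop :=
  (∀ a, u.count a = v.count a) ∧ ∀ a b : S, ¬ I a b → wproj a b u = wproj a b v

lemma WEq.refl (u : List S) : WEq I u u := ⟨fun _ => rfl, fun _ _ _ => rfl⟩

lemma WEq.symm' {u v : List S} (h : WEq I u v) : WEq I v u :=
  ⟨fun a => (h.1 a).symm, fun a b hab => (h.2 a b hab).symm⟩

lemma WEq.trans' {u v w : List S} (h : WEq I u v) (h' : WEq I v w) : WEq I u w :=
  ⟨fun a => (h.1 a).trans (h'.1 a), fun a b hab => (h.2 a b hab).trans (h'.2 a b hab)⟩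

lemma WEq.append {u v u' v' : List S} (h : WEq I u v) (h' : WEq I u' v') :
    WEq I (u ++ u') (v ++ v') := by
  refine ⟨fun a => ?_, fun a b hab => ?_⟩
  · simp [List.count_append, h.1 a, h'.1 a]
  · simp [wproj_append, h.2 a b hab, h'.2 a b hab]

/-- The congruence of the invariants. -/
def wcon (I : S → S → Prop) [DecidableEq S] : Con (FreeMonoid S) where
  r u v := WEq I u.toList v.toList
  iseqv := ⟨fun u => WEq.refl _, WEq.symm', WEq.trans'⟩
  mul' := fun h h' => h.append h'

lemma traceCon_le_wcon (hsym : Symmetric I) (hirr : ∀ a, ¬ I a a) :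
    traceCon I ≤ wcon I := by
  apply Con.conGen_le.2
  rintro u v ⟨a, b, hab, rfl, rfl⟩
  have hne : a ≠ b := fun h => hirr a (h ▸ hab)
  constructor
  · intro c
    show List.count c [a, b] = List.count c [b, a]
    simp [List.count_cons]; omega
  · intro x y hxy
    show wproj x y [a, b] = wproj x y [b, a]
    by_cases ha : a = x ∨ a = y
    · by_cases hb : b = x ∨ b = y
      · exfalso
        rcases ha with rfl | rfl <;> rcases hb with rfl | rfl
        · exact hne rfl
        · exact hxy hab
        · exact hxy (hsym hab)
        · exact hne rfl
      · simp [wproj_cons, ha, hb]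
    · by_cases hb : b = x ∨ b = y
      · simp [wproj_cons, ha, hb]
      · simp [wproj_cons, ha, hb]

/-- Moving a letter independent of a prefix to the front. -/
lemma traceCon_shift (hsym : Symmetric I) {a : S} {q : List S} :
    ∀ {p : List S}, (∀ b ∈ p, I a b) →
      traceCon I (.ofList (p ++ a :: q)) (.ofList (a :: (p ++ q))) := by
  intro p
  induction p with
  | nil => intro _; exact (traceCon I).refl _
  | cons c p ih =>
    intro hp
    have h1 : traceCon I (.ofList (c :: (p ++ a :: q))) (.ofList (c :: a :: (p ++ q))) := by
      have hrec := ih (fun b hb => hp b (List.mem_cons_of_mem _ hb))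
      have := (traceCon I).mul ((traceCon I).refl (FreeMonoid.of c)) hrec
      simpa [FreeMonoid.ofList_cons] using this
    have h2 : traceCon I (.ofList (c :: a :: (p ++ q))) (.ofList (a :: c :: (p ++ q))) := by
      have hstep : traceCon I (FreeMonoid.of c * FreeMonoid.of a)
          (FreeMonoid.of a * FreeMonoid.of c) :=
        ConGen.Rel.of _ _ ⟨c, a, hsym (hp c (List.mem_cons_self)), rfl, rfl⟩
      have := (traceCon I).mul hstep ((traceCon I).refl (FreeMonoid.ofList (p ++ q)))
      simpa [FreeMonoid.ofList_cons, mul_assoc] using this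
    exact (traceCon I).trans h1 h2

lemma exists_split_first {a : S} : ∀ {l : List S}, a ∈ l →
    ∃ p q, l = p ++ a :: q ∧ a ∉ p := by
  intro l
  induction l with
  | nil => intro h; cases h
  | cons c l ih =>
    intro h
    by_cases hca : c = a
    · exact ⟨[], l, by simp [hca], by simp⟩
    · have : a ∈ l := by
        rcases List.mem_cons.mp h with h | h
        · exact absurd h.symm hca
        · exact h
      obtain ⟨p, q, rfl, hp⟩ := ih this
      exact ⟨c :: p, q, rfl, by
        simp only [List.mem_cons, not_or]
        exact ⟨fun h' => hca h'.symm, hp⟩⟩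

lemma wEq_to_traceCon (hsym : Symmetric I) (hirr : ∀ a, ¬ I a a) :
    ∀ (n : ℕ) (u v : List S), u.length ≤ n → WEq I u v →
      traceCon I (.ofList u) (.ofList v) := by
  intro n
  induction n with
  | zero =>
    intro u v hu hw
    have hu0 : u = [] := List.length_eq_zero_iff.mp (Nat.le_zero.mp hu)
    subst hu0
    have hv : v = [] := by
      by_contra hne
      obtain ⟨c, w, rfl⟩ := List.exists_cons_of_ne_nil hne
      have := hw.1 c
      simp [List.count_cons] at this
    subst hv
    exact (traceCon I).refl _
  | succ n ih =>
    intro u v hu hw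
    match u with
    | [] =>
      have hv : v = [] := by
        by_contra hne
        obtain ⟨c, w, rfl⟩ := List.exists_cons_of_ne_nil hne
        have := hw.1 c
        simp [List.count_cons] at this
      subst hv
      exact (traceCon I).refl _
    | a :: u' =>
      have ha : a ∈ v := by
        have := hw.1 a
        simp only [List.count_cons_self] at this
        have : 0 < v.count a := by omega
        exact List.count_pos_iff.mp this
      obtain ⟨p, q, rfl, hap⟩ := exists_split_first ha
      have hip : ∀ b ∈ p, I a b := by
        intro b hb
        by_contra hIb
        have hab : a ≠ b := fun h => hap (h ▸ hb)
        have hproj := hw.2 a b hIb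
        rw [wproj_cons, if_pos (Or.inl rfl), wproj_append, wproj_cons, if_pos (Or.inl rfl)]
          at hproj
        have hbp : b ∈ wproj a b p := mem_wproj.mpr ⟨hb, Or.inr rfl⟩
        obtain ⟨c, r, hcr⟩ := List.exists_cons_of_ne_nil (List.ne_nil_of_mem hbp)
        rw [hcr, List.cons_append] at hproj
        have hac : a = c := (List.cons.injEq _ _ _ _).mp hproj |>.1
        have : c ∈ p := (mem_wproj.mp (hcr ▸ (List.mem_cons_self (a := c) (l := r)))).1
        exact hap (hac ▸ this)
      have hshift := traceCon_shift (I := I) hsym hip (q := q)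
      have hw' : WEq I u' (p ++ q) := by
        constructor
        · intro c
          have := hw.1 c
          simp only [List.count_cons, List.count_append] at this ⊢
          omega
        · intro x y hxy
          have hproj := hw.2 x y hxy
          by_cases hax : a = x ∨ a = y
          · have hp0 : wproj x y p = [] := by
              rw [List.eq_nil_iff_forall_not_mem]
              intro b hb
              rw [mem_wproj] at hb
              obtain ⟨hb, hbxy⟩ := hb
              have hIab := hip b hb
              have hba : b ≠ a := by
                rintro rfl
                exact hirr b hIab
              rcases hax with rfl | rfl <;> rcases hbxy with rfl | rfl
              · exact hba rfl
              · exact hxy hIab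
              · exact hxy (hsym hIab)
              · exact hba rfl
            rw [wproj_cons, if_pos hax, wproj_append, hp0, wproj_cons, if_pos hax] at hproj
            rw [wproj_append, hp0, List.nil_append]
            simpa using hproj
          · rw [wproj_cons, if_neg hax, wproj_append, wproj_cons, if_neg hax] at hproj
            rw [wproj_append]
            exact hproj
      have hlen : u'.length ≤ n := by
        simpa using Nat.lt_succ_iff.mp (Nat.lt_of_lt_of_le (Nat.lt_succ_self _) hu)
      have hcon' := ih u' (p ++ q) hlen hw'
      have hcons : traceCon I (.ofList (a :: u')) (.ofList (a :: (p ++ q))) := by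
        have := (traceCon I).mul ((traceCon I).refl (FreeMonoid.of a)) hcon'
        simpa [FreeMonoid.ofList_cons] using this
      exact (traceCon I).trans hcons ((traceCon I).symm hshift)

/-- Characterization of equality in the trace monoid. -/
lemma tproj_eq_iff (hsym : Symmetric I) (hirr : ∀ a, ¬ I a a) {u v : List S} :
    tproj I (.ofList u) = tproj I (.ofList v) ↔ WEq I u v := by
  constructor
  · intro h
    exact Con.le_def.mp (traceCon_le_wcon hsym hirr) ((traceCon I).eq.1 h)
  · intro h
    exact (traceCon I).eq.2 (wEq_to_traceCon hsym hirr u.length u v le_rfl h)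

end Words

section MonoidLemmas

variable {S : Type*} [DecidableEq S] {I : S → S → Prop}

lemma tlen_mul (x y : TraceMonoid I) : tlen I (x * y) = tlen I x + tlen I y := by
  simp [tlen, map_mul, toAdd_mul]

lemma tlen_one : tlen I (1 : TraceMonoid I) = 0 := by
  simp [tlen, map_one]

lemma tproj_ofList_cons (a : S) (l : List S) :
    tproj I (.ofList (a :: l)) = temb I a * tproj I (.ofList l) := by
  rw [FreeMonoid.ofList_cons, map_mul]; rfl

lemma tlen_temb (a : S) : tlen I (temb I a) = 1 := by
  simp [tlen, temb, tproj, Con.lift_coe, FreeMonoid.lift_eval_of]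

lemma tlen_tproj (l : List S) : tlen I (tproj I (.ofList l)) = l.length := by
  induction l with
  | nil => simpa [map_one] using (tlen_one (I := I))
  | cons a l ih => rw [tproj_ofList_cons, tlen_mul, tlen_temb, ih, List.length_cons]; omega

lemma exists_rep (x : TraceMonoid I) : ∃ l : List S, x = tproj I (.ofList l) := by
  obtain ⟨w, hw⟩ := Con.mk'_surjective (c := traceCon I) x
  exact ⟨FreeMonoid.toList w, by rw [FreeMonoid.ofList_toList]; exact hw.symm⟩

lemma eq_one_of_tlen_eq_zero {x : TraceMonoid I} (h : tlen I x = 0) : x = 1 := by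
  obtain ⟨l, rfl⟩ := exists_rep x
  rw [tlen_tproj] at h
  rw [List.length_eq_zero_iff.mp h]
  simp [map_one]

lemma exists_head {x : TraceMonoid I} (h : tlen I x ≠ 0) :
    ∃ (a : S) (y : TraceMonoid I), x = temb I a * y := by
  obtain ⟨l, rfl⟩ := exists_rep x
  match l with
  | [] => rw [tlen_tproj] at h; simp at h
  | a :: l' => exact ⟨a, tproj I (.ofList l'), tproj_ofList_cons a l'⟩

lemma temb_mul_cancel (hsym : Symmetric I) (hirr : ∀ a, ¬ I a a) {a : S}
    {x y : TraceMonoid I} (h : temb I a * x = temb I a * y) : x = y := by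
  obtain ⟨u, rfl⟩ := exists_rep x
  obtain ⟨v, rfl⟩ := exists_rep y
  rw [← tproj_ofList_cons, ← tproj_ofList_cons] at h
  have hw := (tproj_eq_iff hsym hirr).mp h
  apply (tproj_eq_iff hsym hirr).mpr
  constructor
  · intro c
    have := hw.1 c
    simp only [List.count_cons] at this
    omega
  · intro x' y' hxy
    have hproj := hw.2 x' y' hxy
    by_cases hax : a = x' ∨ a = y'
    · rw [wproj_cons, if_pos hax, wproj_cons, if_pos hax] at hproj
      exact List.tail_eq_of_cons_eq hproj
    · rwa [wproj_cons, if_neg hax, wproj_cons, if_neg hax] at hproj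

lemma headExchange (hsym : Symmetric I) (hirr : ∀ a, ¬ I a a) {a b : S}
    {x y : TraceMonoid I} (hab : a ≠ b) (h : temb I a * x = temb I b * y) :
    I a b ∧ ∃ z, x = temb I b * z ∧ y = temb I a * z := by
  obtain ⟨u, rfl⟩ := exists_rep x
  obtain ⟨v, rfl⟩ := exists_rep y
  rw [← tproj_ofList_cons, ← tproj_ofList_cons] at h
  have hw := (tproj_eq_iff hsym hirr).mp h
  have hIab : I a b := by
    by_contra hIab
    have hproj := hw.2 a b hIab
    rw [wproj_cons, if_pos (Or.inl rfl), wproj_cons, if_pos (Or.inr rfl)] at hproj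
    exact hab (List.head_eq_of_cons_eq hproj)
  have hbu : b ∈ u := by
    have hc := hw.1 b
    simp only [List.count_cons] at hc
    rw [if_neg (by simp [hab]), if_pos (by simp)] at hc
    exact List.count_pos_iff.mp (by omega)
  obtain ⟨p, q, rfl, hbp⟩ := exists_split_first hbu
  have hip : ∀ c ∈ p, I b c := by
    intro c hc
    by_contra hIbc
    have hcb : c ≠ b := fun h' => hbp (h' ▸ hc)
    by_cases hac : a = c
    · exact hIbc (hsym (hac ▸ hIab))
    · have hproj := hw.2 b c hIbc
      have hab' : ¬ (a = b ∨ a = c) := by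
        rintro (rfl | rfl)
        · exact hab rfl
        · exact hac rfl
      rw [wproj_cons, if_neg hab', wproj_append, wproj_cons, if_pos (Or.inl rfl),
        wproj_cons, if_pos (Or.inl rfl)] at hproj
      have hcp : c ∈ wproj b c p := mem_wproj.mpr ⟨hc, Or.inr rfl⟩
      obtain ⟨d, r, hdr⟩ := List.exists_cons_of_ne_nil (List.ne_nil_of_mem hcp)
      rw [hdr, List.cons_append] at hproj
      have hbd : b = d := List.head_eq_of_cons_eq hproj.symm
      have : d ∈ p := (mem_wproj.mp (hdr ▸ (List.mem_cons_self (a := d) (l := r)))).1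
      exact hbp (hbd ▸ this)
  have hx : tproj I (.ofList (p ++ b :: q)) = temb I b * tproj I (.ofList (p ++ q)) := by
    have hcon := (traceCon I).eq.2 (traceCon_shift hsym hip (q := q))
    have e : ∀ w : FreeMonoid S, tproj I w = (w : (traceCon I).Quotient) := fun w =>
      congrFun Con.coe_mk' w
    rw [← tproj_ofList_cons, e, e]
    exact hcon
  refine ⟨hIab, tproj I (.ofList (p ++ q)), hx, ?_⟩
  have h2 : temb I b * (temb I a * tproj I (.ofList (p ++ q))) =
      temb I b * tproj I (.ofList v) := by
    rw [← mul_assoc, ← (temb_commute hIab).eq, mul_assoc, ← hx]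
    exact h
  exact (temb_mul_cancel hsym hirr h2).symm

end MonoidLemmas

section Counting

open scoped Classical

variable {S : Type*} [Fintype S] {I : S → S → Prop}

/-- The set of "active" letters of a pair (clique, trace). -/
noncomputable def Aset (I : S → S → Prop) (s : Finset S) (x : TraceMonoid I) : Finset S :=
  Finset.univ.filter (fun a => a ∈ s ∨ ((∀ b ∈ s, I a b) ∧ ∃ z, x = temb I a * z))

lemma mem_Aset {s : Finset S} {x : TraceMonoid I} {a : S} :
    a ∈ Aset I s x ↔ a ∈ s ∨ ((∀ b ∈ s, I a b) ∧ ∃ z, x = temb I a * z) := by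
  simp [Aset]

lemma clique_erase (c : Clique I) (m : S) : IsClique I (c.1.erase m) :=
  c.2.mono (Finset.coe_subset.mpr (Finset.erase_subset m c.1))

lemma clique_insert (hsym : Symmetric I) (c : Clique I) (m : S)
    (h : ∀ b ∈ c.1, I m b) : IsClique I (insert m c.1) := by
  intro a ha b hb hab
  simp only [Finset.coe_insert, Set.mem_insert_iff, Finset.mem_coe] at ha hb
  rcases ha with rfl | ha <;> rcases hb with rfl | hb
  · exact absurd rfl hab
  · exact h b hb
  · exact hsym (h a ha)
  · exact c.2 ha hb hab

lemma Aset_erase (hsym : Symmetric I) (hirr : ∀ a, ¬ I a a) {s : Finset S}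
    (hs : IsClique I s) {m : S} (hm : m ∈ s) (x : TraceMonoid I) :
    Aset I (s.erase m) (temb I m * x) = Aset I s x := by
  ext a
  simp only [mem_Aset]
  by_cases ham : a = m
  · subst ham
    constructor
    · intro _; exact Or.inl hm
    · intro _
      refine Or.inr ⟨?_, x, rfl⟩
      intro b hb
      obtain ⟨hbm, hbs⟩ := Finset.mem_erase.mp hb
      exact hs (Finset.mem_coe.mpr hm) (Finset.mem_coe.mpr hbs) (Ne.symm hbm)
  · constructor
    · rintro (hmem | ⟨hind, z, hz⟩)
      · exact Or.inl (Finset.mem_erase.mp hmem).2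
      · obtain ⟨hIma, w, hw1, _⟩ := headExchange hsym hirr (Ne.symm ham) hz
        refine Or.inr ⟨?_, w, hw1⟩
        intro b hb
        by_cases hbm : b = m
        · subst hbm; exact hsym hIma
        · exact hind b (Finset.mem_erase.mpr ⟨hbm, hb⟩)
    · rintro (has | ⟨hind, z, hz⟩)
      · exact Or.inl (Finset.mem_erase.mpr ⟨ham, has⟩)
      · refine Or.inr ⟨fun b hb => hind b (Finset.mem_erase.mp hb).2, temb I m * z, ?_⟩
        rw [hz, ← mul_assoc, (temb_commute (hsym (hind m hm))).eq, mul_assoc]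

lemma Aset_nonempty (s : Finset S) (x : TraceMonoid I) (h : s.card + tlen I x ≠ 0) :
    (Aset I s x).Nonempty := by
  rcases Finset.eq_empty_or_nonempty s with rfl | ⟨a, ha⟩
  · have hx : tlen I x ≠ 0 := by simpa using h
    obtain ⟨a, y, hy⟩ := exists_head hx
    exact ⟨a, mem_Aset.mpr (Or.inr ⟨by simp, y, hy⟩)⟩
  · exact ⟨a, mem_Aset.mpr (Or.inl ha)⟩

/-- A canonical choice of an element of a nonempty finset. -/
noncomputable def pickel (A : Finset S) (h : A.Nonempty) : S := h.choose

lemma pickel_mem (A : Finset S) (h : A.Nonempty) : pickel A h ∈ A := h.choose_spec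

lemma pickel_congr {A B : Finset S} (hAB : A = B) (hA : A.Nonempty) (hB : B.Nonempty) :
    pickel A hA = pickel B hB := by subst hAB; rfl

/-- Pairs (clique, trace) of total length `n`. -/
def Pairs (I : S → S → Prop) (n : ℕ) : Type _ :=
  {p : Clique I × TraceMonoid I // p.1.1.card + tlen I p.2 = n}

/-- The chosen active letter of a pair. -/
noncomputable def pk {n : ℕ} (hn : n ≠ 0) (p : Pairs I n) : S :=
  pickel (Aset I p.1.1.1 p.1.2) (Aset_nonempty p.1.1.1 p.1.2 (by rw [p.2]; exact hn))

lemma pk_mem {n : ℕ} (hn : n ≠ 0) (p : Pairs I n) :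
    pk hn p ∈ Aset I p.1.1.1 p.1.2 := pickel_mem _ _

/-- The sign-reversing involution. -/
noncomputable def gfun (hsym : Symmetric I) (hirr : ∀ a, ¬ I a a) {n : ℕ} (hn : n ≠ 0)
    (p : Pairs I n) : Pairs I n :=
  if hm : pk hn p ∈ p.1.1.1 then
    ⟨(⟨p.1.1.1.erase (pk hn p), clique_erase p.1.1 (pk hn p)⟩, temb I (pk hn p) * p.1.2), by
      have h1 := p.2
      have hpos : 0 < p.1.1.1.card := Finset.card_pos.mpr ⟨_, hm⟩
      show (p.1.1.1.erase (pk hn p)).card + tlen I (temb I (pk hn p) * p.1.2) = n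
      rw [Finset.card_erase_of_mem hm, tlen_mul, tlen_temb]
      omega⟩
  else
    have hmem := (mem_Aset.mp (pk_mem hn p)).resolve_left hm
    ⟨(⟨insert (pk hn p) p.1.1.1, clique_insert hsym p.1.1 (pk hn p) hmem.1⟩,
        hmem.2.choose), by
      have h1 := p.2
      have h3 := congrArg (tlen I) hmem.2.choose_spec
      rw [tlen_mul, tlen_temb] at h3
      show (insert (pk hn p) p.1.1.1).card + tlen I hmem.2.choose = n
      rw [Finset.card_insert_of_notMem hm]
      omega⟩

variable {hsym : Symmetric I} {hirr : ∀ a, ¬ I a a} {n : ℕ} {hn : n ≠ 0}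

lemma gfun_pos (p : Pairs I n) (hm : pk hn p ∈ p.1.1.1) :
    (gfun hsym hirr hn p).1.1.1 = p.1.1.1.erase (pk hn p) ∧
      (gfun hsym hirr hn p).1.2 = temb I (pk hn p) * p.1.2 := by
  simp only [gfun]
  erw [dif_pos hm]
  exact ⟨rfl, rfl⟩

lemma gfun_neg (p : Pairs I n) (hm : pk hn p ∉ p.1.1.1) :
    (gfun hsym hirr hn p).1.1.1 = insert (pk hn p) p.1.1.1 ∧
      p.1.2 = temb I (pk hn p) * (gfun hsym hirr hn p).1.2 := by
  simp only [gfun]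
  erw [dif_neg hm]
  exact ⟨rfl, ((mem_Aset.mp (pk_mem hn p)).resolve_left hm).2.choose_spec⟩

lemma Aset_gfun (p : Pairs I n) :
    Aset I (gfun hsym hirr hn p).1.1.1 (gfun hsym hirr hn p).1.2 =
      Aset I p.1.1.1 p.1.2 := by
  by_cases hm : pk hn p ∈ p.1.1.1
  · obtain ⟨h1, h2⟩ := gfun_pos p hm
    rw [h1, h2]
    exact Aset_erase hsym hirr p.1.1.2 hm p.1.2
  · obtain ⟨h1, h2⟩ := gfun_neg p hm
    have hind := ((mem_Aset.mp (pk_mem hn p)).resolve_left hm).1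
    have hkey := Aset_erase hsym hirr (clique_insert hsym p.1.1 (pk hn p) hind)
      (Finset.mem_insert_self (pk hn p) p.1.1.1) (gfun hsym hirr hn p).1.2
    rw [Finset.erase_insert hm] at hkey
    rw [h1, ← hkey, ← h2]

lemma pk_gfun (p : Pairs I n) : pk hn (gfun hsym hirr hn p) = pk hn p :=
  pickel_congr (Aset_gfun p) _ _

lemma gfun_card (p : Pairs I n) :
    (gfun hsym hirr hn p).1.1.1.card = p.1.1.1.card + 1 ∨
      p.1.1.1.card = (gfun hsym hirr hn p).1.1.1.card + 1 := by
  by_cases hm : pk hn p ∈ p.1.1.1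
  · right
    rw [(gfun_pos p hm).1, Finset.card_erase_of_mem hm]
    have : 0 < p.1.1.1.card := Finset.card_pos.mpr ⟨_, hm⟩
    omega
  · left
    rw [(gfun_neg p hm).1, Finset.card_insert_of_notMem hm]

lemma gfun_gfun (p : Pairs I n) :
    gfun hsym hirr hn (gfun hsym hirr hn p) = p := by
  have hpk : pk hn (gfun hsym hirr hn p) = pk hn p := pk_gfun p
  set q := gfun hsym hirr hn p with hq
  by_cases hm : pk hn p ∈ p.1.1.1
  · obtain ⟨h1, h2⟩ := gfun_pos p hm
    have hmq : pk hn q ∉ q.1.1.1 := by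
      rw [hpk, h1]; exact Finset.notMem_erase _ _
    obtain ⟨g1, g2⟩ := gfun_neg q hmq
    rw [hpk] at g1 g2
    apply Subtype.ext
    apply Prod.ext
    · apply Subtype.ext
      rw [g1, h1, Finset.insert_erase hm]
    · rw [h2] at g2
      exact (temb_mul_cancel hsym hirr g2).symm
  · obtain ⟨h1, h2⟩ := gfun_neg p hm
    have hmq : pk hn q ∈ q.1.1.1 := by
      rw [hpk, h1]; exact Finset.mem_insert_self _ _
    obtain ⟨g1, g2⟩ := gfun_pos q hmq
    rw [hpk] at g1 g2
    apply Subtype.ext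
    apply Prod.ext
    · apply Subtype.ext
      rw [g1, h1, Finset.erase_insert hm]
    · rw [g2, ← h2]

lemma gfun_ne (p : Pairs I n) : gfun hsym hirr hn p ≠ p := by
  intro h
  rcases gfun_card (hsym := hsym) (hirr := hirr) p with h' | h' <;> rw [h] at h' <;> omega

instance finite_tlen_le (n : ℕ) : Finite {x : TraceMonoid I // tlen I x ≤ n} := by
  have hsub : {x : TraceMonoid I | tlen I x ≤ n} ⊆
      Set.range (fun kf : Σ k : Fin (n + 1), (Fin (k : ℕ) → S) =>
        tproj I (.ofList (List.ofFn kf.2))) := by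
    rintro x hx
    obtain ⟨l, rfl⟩ := exists_rep x
    rw [Set.mem_setOf_eq, tlen_tproj] at hx
    refine ⟨⟨⟨l.length, by omega⟩, fun i => l.get i⟩, ?_⟩
    simp only [List.ofFn_get]
  exact (Set.Finite.subset (Set.finite_range _) hsub).to_subtype

instance finite_tlen_eq (k : ℕ) : Finite {x : TraceMonoid I // tlen I x = k} :=
  Finite.of_injective
    (fun x => (⟨x.1, le_of_eq x.2⟩ : {x : TraceMonoid I // tlen I x ≤ k}))
    (by rintro ⟨a, ha⟩ ⟨b, hb⟩ e; simpa using e)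

instance finite_addconstr (k n : ℕ) : Finite {x : TraceMonoid I // k + tlen I x = n} :=
  Finite.of_injective
    (fun x => (⟨x.1, by have := x.2; omega⟩ : {x : TraceMonoid I // tlen I x ≤ n}))
    (by rintro ⟨a, ha⟩ ⟨b, hb⟩ e; simpa using e)

instance finite_pairs (n : ℕ) : Finite (Pairs I n) :=
  Finite.of_injective
    (fun p => ((p.1.1, ⟨p.1.2, by have := p.2; omega⟩) :
      Clique I × {x : TraceMonoid I // tlen I x ≤ n}))
    (by
      rintro ⟨⟨c, x⟩, h⟩ ⟨⟨c', x'⟩, h'⟩ e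
      simp only [Prod.mk.injEq, Subtype.mk.injEq] at e
      exact Subtype.ext (Prod.ext e.1 e.2))

lemma key_sum (hsym : Symmetric I) (hirr : ∀ a, ¬ I a a) {n : ℕ} (hn : n ≠ 0)
    [Fintype (Pairs I n)] :
    ∑ p : Pairs I n, ((-1 : ℤ)) ^ p.1.1.1.card = 0 := by
  apply Finset.sum_ninvolution (gfun hsym hirr hn)
  · intro p
    rcases gfun_card (hsym := hsym) (hirr := hirr) (hn := hn) p with h | h
    · rw [h, pow_succ]; ring
    · rw [h, pow_succ]; ring
  · intro p _
    exact gfun_ne p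
  · intro p
    exact Finset.mem_univ _
  · intro p
    exact gfun_gfun p

set_option maxHeartbeats 1000000 in
lemma main_count (hsym : Symmetric I) (hirr : ∀ a, ¬ I a a) (n : ℕ) :
    ∑ ij ∈ Finset.HasAntidiagonal.antidiagonal n,
        (Nat.card {x : TraceMonoid I // tlen I x = ij.1} : ℤ) *
          (∑ c : Clique I, if ij.2 = c.1.card then ((-1 : ℤ)) ^ c.1.card else 0) =
      if n = 0 then 1 else 0 := by
  have step1 : ∑ ij ∈ Finset.HasAntidiagonal.antidiagonal n,
      (Nat.card {x : TraceMonoid I // tlen I x = ij.1} : ℤ) *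
        (∑ c : Clique I, if ij.2 = c.1.card then ((-1 : ℤ)) ^ c.1.card else 0) =
      ∑ c : Clique I, ∑ ij ∈ Finset.HasAntidiagonal.antidiagonal n,
        (Nat.card {x : TraceMonoid I // tlen I x = ij.1} : ℤ) *
          (if ij.2 = c.1.card then ((-1 : ℤ)) ^ c.1.card else 0) := by
    simp_rw [Finset.mul_sum]
    rw [Finset.sum_comm]
  rw [step1]
  have step2 : ∀ c : Clique I, (∑ ij ∈ Finset.HasAntidiagonal.antidiagonal n,
      (Nat.card {x : TraceMonoid I // tlen I x = ij.1} : ℤ) *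
        (if ij.2 = c.1.card then ((-1 : ℤ)) ^ c.1.card else 0)) =
      if c.1.card ≤ n then
        (Nat.card {x : TraceMonoid I // tlen I x = n - c.1.card} : ℤ) * ((-1 : ℤ)) ^ c.1.card
      else 0 := by
    intro c
    by_cases hc : c.1.card ≤ n
    · rw [if_pos hc]
      rw [Finset.sum_eq_single_of_mem ((n - c.1.card, c.1.card) : ℕ × ℕ)
        (Finset.HasAntidiagonal.mem_antidiagonal.mpr (by omega))]
      · rw [if_pos rfl]
      · intro ij hij hne
        by_cases h2 : ij.2 = c.1.card
        · exfalso
          apply hne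
          have := Finset.HasAntidiagonal.mem_antidiagonal.mp hij
          have : ij.1 = n - c.1.card := by omega
          exact Prod.ext this h2
        · rw [if_neg h2, mul_zero]
    · rw [if_neg hc]
      apply Finset.sum_eq_zero
      intro ij hij
      have := Finset.HasAntidiagonal.mem_antidiagonal.mp hij
      rw [if_neg (by omega), mul_zero]
  simp_rw [step2]
  by_cases hn : n = 0
  · subst hn
    rw [if_pos rfl]
    rw [Finset.sum_eq_single_of_mem (⟨∅, by simp [IsClique]⟩ : Clique I)
      (Finset.mem_univ _)]
    · have hdef : tlen I (1 : TraceMonoid I) = 0 - Finset.card (∅ : Finset S) := by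
        simpa using (tlen_one (I := I))
      haveI : Unique {x : TraceMonoid I // tlen I x = 0 - Finset.card (∅ : Finset S)} :=
        { default := ⟨1, hdef⟩
          uniq := by
            rintro ⟨x, hx⟩
            exact Subtype.ext (eq_one_of_tlen_eq_zero (by simpa using hx)) }
      have h0 : Nat.card {x : TraceMonoid I // tlen I x = 0 - Finset.card (∅ : Finset S)} = 1 :=
        Nat.card_unique
      rw [if_pos (by simp), h0]
      simp
    · intro c _ hne
      have hcard : c.1.card ≠ 0 := by
        intro h0
        exact hne (Subtype.ext (Finset.card_eq_zero.mp h0))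
      rw [if_neg (by omega)]
  · rw [if_neg hn]
    letI : Fintype (Pairs I n) := Fintype.ofFinite _
    haveI instT : ∀ c : Clique I, Fintype {x : TraceMonoid I // c.1.card + tlen I x = n} :=
      fun c => Fintype.ofFinite _
    have hinner : ∀ c : Clique I,
        (if c.1.card ≤ n then
          (Nat.card {x : TraceMonoid I // tlen I x = n - c.1.card} : ℤ) *
            ((-1 : ℤ)) ^ c.1.card else 0) =
        ∑ _x : {x : TraceMonoid I // c.1.card + tlen I x = n}, ((-1 : ℤ)) ^ c.1.card := by
      intro c
      rw [Finset.sum_const, Finset.card_univ, nsmul_eq_mul]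
      by_cases hc : c.1.card ≤ n
      · rw [if_pos hc]
        congr 1
        have hiff : ∀ x : TraceMonoid I,
            (c.1.card + tlen I x = n ↔ tlen I x = n - c.1.card) := fun x => by omega
        rw [← Nat.card_eq_fintype_card, Nat.card_congr (Equiv.subtypeEquivRight hiff)]
      · rw [if_neg hc]
        haveI : IsEmpty {x : TraceMonoid I // c.1.card + tlen I x = n} :=
          ⟨fun x => hc (by have := x.2; omega)⟩
        rw [Fintype.card_eq_zero]
        simp
    simp_rw [hinner]
    calc (∑ c : Clique I, ∑ _x : {x : TraceMonoid I // c.1.card + tlen I x = n},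
          ((-1 : ℤ)) ^ c.1.card)
        = ∑ s : (Σ c : Clique I, {x : TraceMonoid I // c.1.card + tlen I x = n}),
            ((-1 : ℤ)) ^ s.1.1.card := by
          rw [← Finset.univ_sigma_univ, Finset.sum_sigma]
      _ = ∑ p : Pairs I n, ((-1 : ℤ)) ^ p.1.1.1.card :=
          Fintype.sum_equiv
            (⟨fun s => ⟨(s.1, s.2.1), s.2.2⟩, fun p => ⟨p.1.1, ⟨p.1.2, p.2⟩⟩,
              fun s => rfl, fun p => rfl⟩ :
              (Σ c : Clique I, {x : TraceMonoid I // c.1.card + tlen I x = n}) ≃ Pairs I n)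
            _ _ (fun s => rfl)
      _ = 0 := key_sum hsym hirr hn

end Counting

end TraceDoc

open scoped Classical in
open TraceDoc in
/-- The growth series of a trace monoid is the formal inverse of its Möbius
polynomial. -/
theorem stmt5 {S : Type*} [Fintype S] (I : S → S → Prop)
    (hsym : Symmetric I) (hirr : ∀ a, ¬ I a a) :
    (PowerSeries.mk fun n => (Nat.card {x : TraceMonoid I // tlen I x = n} : ℤ)) *
      (∑ c : Clique I, PowerSeries.monomial c.1.card ((-1 : ℤ) ^ c.1.card)) = 1 := by
  ext n
  rw [PowerSeries.coeff_mul, PowerSeries.coeff_one]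
  have hstep : ∀ ij : ℕ × ℕ, ij ∈ Finset.HasAntidiagonal.antidiagonal n →
      (PowerSeries.coeff ij.1)
          (PowerSeries.mk fun k => (Nat.card {x : TraceMonoid I // tlen I x = k} : ℤ)) *
        (PowerSeries.coeff ij.2)
          (∑ c : Clique I, PowerSeries.monomial c.1.card ((-1 : ℤ) ^ c.1.card)) =
      (Nat.card {x : TraceMonoid I // tlen I x = ij.1} : ℤ) *
        (∑ c : Clique I, if ij.2 = c.1.card then ((-1 : ℤ)) ^ c.1.card else 0) := by
    intro ij _
    rw [PowerSeries.coeff_mk, map_sum]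
    congr 1
    exact Finset.sum_congr rfl fun c _ => PowerSeries.coeff_monomial _ _ _
  rw [Finset.sum_congr rfl hstep]
  exact main_count hsym hirr n
end

section
/- Let 𝒳 = (M, X, ⊥) be a deterministic concurrent system, α a state, and c ∈ 𝒞_α a clique such that some letter a ∈ Σ_α does not occur in c. Then for every execution x ∈ M_α whose Cartier–Foata normal form starts with the clique c, the letter a does not occur in x. -/
/-!
For a letter `a`, send a trace to the first of its letters that does not commute with `a`,
recording only whether that letter is `a` itself. This is a monoid morphism into a monoid in
which every non-unit is left absorbing, so it is unchanged when the trace is extended to the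
right. If `x` is in normal form starting with a clique `c ∌ a`, normality forces that first
letter not to be `a`. Determinism gives a common extension `z` of `a` and `x` in `M_α`; if some
letter of `x` failed to commute with `a`, then `z` would see its first dependent letter both
as `a` (through the prefix `a`) and as something else (through the prefix `x`). Hence every
letter of `x` commutes with `a`, and in particular `a` does not occur in `x`.
-/

namespace TraceDoc

def First (α : Type*) := Option α

instance (α : Type*) : Monoid (First α) where
  mul := Option.or
  one := none
  mul_assoc _ _ _ := Option.or_assoc
  one_mul _ := Option.none_or
  mul_one _ := Option.or_none

namespace First

variable {α : Type*}

def of (a : α) : First α := some a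

theorem of_ne_one (a : α) : of a ≠ 1 := Option.some_ne_none a

theorem of_injective : Function.Injective (of : α → First α) := Option.some_injective α

theorem commute_of_eq_one_or {x y : First α} (h : x = 1 ∨ y = 1 ∨ x = y) : Commute x y := by
  rcases h with rfl | rfl | rfl
  exacts [Commute.one_left y, Commute.one_right x, Commute.refl x]

theorem mul_eq_one {x y : First α} : x * y = 1 ↔ x = 1 ∧ y = 1 :=
  Option.or_eq_none_iff

theorem mul_eq_left {x : First α} (hx : x ≠ 1) (y : First α) : x * y = x := by
  obtain ⟨a, rfl⟩ := Option.ne_none_iff_exists'.1 hx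
  rfl

theorem mul_ne {x y z : First α} (hx : x ≠ z) (hy : y ≠ z) : x * y ≠ z := by
  by_cases h : x = 1
  · rwa [h, one_mul]
  · rwa [mul_eq_left h]

end First

variable {S : Type*} {I : S → S → Prop}

theorem TraceMonoid.induction_on {p : TraceMonoid I → Prop} (x : TraceMonoid I) (one : p 1)
    (temb_mul : ∀ b x, p x → p (temb I b * x)) : p x := by
  obtain ⟨w, rfl⟩ := (traceCon I).mk'_surjective x
  induction w using FreeMonoid.inductionOn' with
  | one => exact one
  | of_mul b w ih => exact temb_mul b _ ih

theorem tcount_mul [DecidableEq S] (a : S) (x y : TraceMonoid I) :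
    tcount I a (x * y) = tcount I a x + tcount I a y := by
  simp [tcount, map_mul]

theorem tcount_temb [DecidableEq S] (a b : S) :
    tcount I a (temb I b) = if b = a then 1 else 0 := by
  simp [tcount, temb, tproj]

theorem temb_tle_cprod {d : Clique I} {b : S} (hb : b ∈ d.1) : tle I (temb I b) (cprod I d) := by
  classical
  exact ⟨_, (Finset.mul_noncommProd_erase d.1 hb (temb I) _).symm⟩

open Classical in
noncomputable def depLabel (I : S → S → Prop) (a b : S) : First Bool :=
  if b = a then .of true else if I a b then 1 else .of false

theorem depLabel_self (a : S) : depLabel I a a = .of true := if_pos rfl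

theorem depLabel_ne_of_true {a b : S} (hb : b ≠ a) : depLabel I a b ≠ .of true := by
  rw [depLabel, if_neg hb]
  split_ifs
  exacts [(First.of_ne_one _).symm, fun h => Bool.false_ne_true (First.of_injective h)]

theorem depLabel_eq_one {a b : S} (h : depLabel I a b = 1) : b ≠ a ∧ I a b := by
  rw [depLabel] at h
  split_ifs at h with hb hab
  exacts [absurd h (First.of_ne_one _), ⟨hb, hab⟩, absurd h (First.of_ne_one _)]

theorem depLabel_commute (hsym : Symmetric I) (a : S) {b c : S} (hbc : I b c) :
    Commute (depLabel I a b) (depLabel I a c) := by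
  apply First.commute_of_eq_one_or
  by_cases hb : b = a
  · subst hb
    by_cases hc : c = b
    · exact Or.inr (Or.inr (by rw [hc]))
    · exact Or.inr (Or.inl (by rw [depLabel, if_neg hc, if_pos hbc]))
  by_cases hc : c = a
  · subst hc
    exact Or.inl (by rw [depLabel, if_neg hb, if_pos (hsym hbc)])
  by_cases hab : I a b
  · exact Or.inl (by rw [depLabel, if_neg hb, if_pos hab])
  by_cases hac : I a c
  · exact Or.inr (Or.inl (by rw [depLabel, if_neg hc, if_pos hac]))
  · refine Or.inr (Or.inr ?_)
    rw [depLabel, depLabel, if_neg hb, if_neg hc, if_neg hab, if_neg hac]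

noncomputable def firstDependent (hsym : Symmetric I) (a : S) : TraceMonoid I →* First Bool :=
  Con.lift _ (FreeMonoid.lift (depLabel I a)) <| Con.conGen_le.2 <| by
    rintro _ _ ⟨b, c, hbc, rfl, rfl⟩
    simp only [Con.ker_rel, map_mul, FreeMonoid.lift_eval_of]
    exact depLabel_commute hsym a hbc

section firstDependent

variable (hsym : Symmetric I) {a : S}

theorem firstDependent_temb (b : S) : firstDependent hsym a (temb I b) = depLabel I a b := rfl

theorem firstDependent_eq_one_of_tle {x y : TraceMonoid I} (hxy : tle I x y)
    (hy : firstDependent hsym a y = 1) : firstDependent hsym a x = 1 := by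
  obtain ⟨z, rfl⟩ := hxy
  exact (First.mul_eq_one.1 (by rwa [← map_mul])).1

theorem firstDependent_eq_of_tle {x y : TraceMonoid I} (hxy : tle I x y)
    (hx : firstDependent hsym a x ≠ 1) : firstDependent hsym a y = firstDependent hsym a x := by
  obtain ⟨z, rfl⟩ := hxy
  rw [map_mul, First.mul_eq_left hx]

theorem tcount_eq_zero_of_firstDependent_eq_one [DecidableEq S] {x : TraceMonoid I}
    (hx : firstDependent hsym a x = 1) : tcount I a x = 0 := by
  induction x using TraceMonoid.induction_on with
  | one => simp [tcount]
  | temb_mul b x ih =>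
    rw [map_mul, First.mul_eq_one, firstDependent_temb] at hx
    rw [tcount_mul, tcount_temb, if_neg (depLabel_eq_one hx.1).1, ih hx.2]

theorem firstDependent_cprod_ne_of_true {d : Clique I} (hd : a ∉ d.1) :
    firstDependent hsym a (cprod I d) ≠ .of true := by
  rw [cprod]
  erw [Finset.map_noncommProd]
  refine Finset.noncommProd_induction _ _ _ (· ≠ First.of true) (fun _ _ => First.mul_ne)
    (First.of_ne_one _).symm fun b hb => ?_
  exact depLabel_ne_of_true (ne_of_mem_of_not_mem hb hd)

theorem firstDependent_normalForm_ne_of_true (l : List (Clique I)) {d : Clique I}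
    (hl : (d :: l).IsChain (NormalPair I)) (hd : a ∉ d.1) :
    firstDependent hsym a (cprod I d * (l.map (cprod I)).prod) ≠ .of true := by
  induction l generalizing d with
  | nil => simpa using firstDependent_cprod_ne_of_true hsym hd
  | cons e l ih =>
    obtain ⟨hde, hl⟩ := List.isChain_cons_cons.1 hl
    rw [List.map_cons, List.prod_cons, map_mul]
    by_cases hd1 : firstDependent hsym a (cprod I d) = 1
    · have he : a ∉ e.1 := fun hae => by
        obtain ⟨b, hb, hba⟩ := hde a hae
        have := depLabel_eq_one (firstDependent_eq_one_of_tle hsym (temb_tle_cprod hb) hd1)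
        exact hba (hsym this.2)
      rw [hd1, one_mul]
      exact ih hl he
    · rw [First.mul_eq_left hd1]
      exact firstDependent_cprod_ne_of_true hsym hd

end firstDependent

end TraceDoc

open TraceDoc in
theorem stmt14_general {S X : Type*} [DecidableEq S]
    (I : S → S → Prop) (hsym : Symmetric I)
    (C : ConcurrentSystem I X)
    (hdet : ∀ (α : X) (x y : TraceMonoid I), x ∈ C.execs α → y ∈ C.execs α →
      ∃ z ∈ C.execs α, tle I x z ∧ tle I y z)
    (α : X) (c : Clique I)
    (a : S) (ha : temb I a ∈ C.execs α) (hac : a ∉ c.1) :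
    ∀ x ∈ C.execs α, ∀ l : List (Clique I),
      (∀ d ∈ l, d.1.Nonempty) → List.Chain' (NormalPair I) (c :: l) →
      x = cprod I c * (l.map (cprod I)).prod →
      tcount I a x = 0 := by
  intro x hx l _ hl hxl
  obtain ⟨z, -, haz, hxz⟩ := hdet α _ _ ha hx
  have ha1 : firstDependent hsym a (temb I a) = .of true := depLabel_self a
  refine tcount_eq_zero_of_firstDependent_eq_one hsym (by_contra fun hx1 => ?_)
  have hz_a : firstDependent hsym a z = .of true := by
    rw [firstDependent_eq_of_tle hsym haz (ha1 ▸ First.of_ne_one _), ha1]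
  have hz_x : firstDependent hsym a z = firstDependent hsym a x :=
    firstDependent_eq_of_tle hsym hxz hx1
  subst hxl
  exact firstDependent_normalForm_ne_of_true hsym l hl hac (hz_x ▸ hz_a)

open TraceDoc in
/-- In a deterministic concurrent system, if a letter `a` is enabled at `α`
but does not occur in the first clique `c` of the normal form of an execution
`x ∈ M_α`, then `a` does not occur in `x` at all. -/
theorem stmt14 {S X : Type*} [Fintype S] [DecidableEq S] [Fintype X]
    (I : S → S → Prop) (hsym : Symmetric I) (hirr : ∀ a, ¬ I a a)
    (C : ConcurrentSystem I X)
    (hdet : ∀ (α : X) (x y : TraceMonoid I), x ∈ C.execs α → y ∈ C.execs α →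
      ∃ z ∈ C.execs α, tle I x z ∧ tle I y z)
    (α : X) (c : Clique I) (hcne : c.1.Nonempty) (hc : cprod I c ∈ C.execs α)
    (a : S) (ha : temb I a ∈ C.execs α) (hac : a ∉ c.1) :
    ∀ x ∈ C.execs α, ∀ l : List (Clique I),
      (∀ d ∈ l, d.1.Nonempty) → List.Chain' (NormalPair I) (c :: l) →
      x = cprod I c * (l.map (cprod I)).prod →
      tcount I a x = 0 :=
  stmt14_general I hsym C hdet α c a ha hac
end

section
/- In a deterministic concurrent system in which Σ_α ≠ ∅ for every state α, the dominant valuation is probabilistic: for every state α, the Möbius transform h_α of the restriction of f_α to cliques satisfies h_α(c_α) = 1 where c_α = Σ_α is the maximum clique of 𝒞_α, and h_α(c) = 0 for every other clique c ∈ 𝒞_α; in particular h_α(ε) = 0 and h_α ≥ 0 on nonempty cliques. -/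
section Stmt16Aux

open TraceDoc
open scoped Classical

variable {S : Type*} {I : S → S → Prop}

/-- Auxiliary monoid recording "`a` left-divides" and "`a` is independent of
all letters" of a trace. -/
structure DM16 : Type where
  d : Prop
  c : Prop

theorem DM16.ext' : ∀ {x y : DM16}, (x.d ↔ y.d) → (x.c ↔ y.c) → x = y
  | ⟨d1, c1⟩, ⟨d2, c2⟩, hd, hc => by
    have h1 : d1 = d2 := propext hd
    have h2 : c1 = c2 := propext hc
    subst h1; subst h2; rfl

instance : Monoid DM16 where
  mul x y := ⟨x.d ∨ (x.c ∧ y.d), x.c ∧ y.c⟩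
  one := ⟨False, True⟩
  mul_assoc x y z := DM16.ext'
    (by show ((x.d ∨ (x.c ∧ y.d)) ∨ ((x.c ∧ y.c) ∧ z.d)) ↔
          (x.d ∨ (x.c ∧ (y.d ∨ (y.c ∧ z.d)))); tauto)
    (by show ((x.c ∧ y.c) ∧ z.c) ↔ (x.c ∧ (y.c ∧ z.c)); tauto)
  one_mul x := DM16.ext'
    (by show (False ∨ (True ∧ x.d)) ↔ x.d; tauto)
    (by show (True ∧ x.c) ↔ x.c; tauto)
  mul_one x := DM16.ext'
    (by show (x.d ∨ (x.c ∧ False)) ↔ x.d; tauto)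
    (by show (x.c ∧ True) ↔ x.c; tauto)

/-- The invariant hom deciding left-divisibility by the letter `a`. -/
def phi16 (I : S → S → Prop) (hsym : Symmetric I) (a : S) :
    TraceMonoid I →* DM16 :=
  Con.lift _ (FreeMonoid.lift fun b => DM16.mk (b = a) (I a b)) <| by
    apply Con.conGen_le.2
    rintro u v ⟨x, y, hxy, rfl, rfl⟩
    rw [Con.ker_rel]
    simp only [map_mul, FreeMonoid.lift_eval_of]
    refine DM16.ext' ?_ ?_
    · show (x = a ∨ (I a x ∧ y = a)) ↔ (y = a ∨ (I a y ∧ x = a))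
      constructor
      · rintro (rfl | ⟨h1, rfl⟩)
        · exact Or.inr ⟨hxy, rfl⟩
        · exact Or.inl rfl
      · rintro (rfl | ⟨h1, rfl⟩)
        · exact Or.inr ⟨hsym hxy, rfl⟩
        · exact Or.inl rfl
    · show (I a x ∧ I a y) ↔ (I a y ∧ I a x); tauto

/-- `Dt hsym a x` : the letter `a` left-divides the trace `x`. -/
def Dt (hsym : Symmetric I) (a : S) (x : TraceMonoid I) : Prop :=
  (phi16 I hsym a x).d

lemma Dt_one (hsym : Symmetric I) (a : S) : ¬ Dt hsym a 1 := by
  simp only [Dt, map_one]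
  exact id

lemma Dt_temb_mul (hsym : Symmetric I) (a b : S) (x : TraceMonoid I) :
    Dt hsym a (temb I b * x) ↔ (b = a ∨ (I a b ∧ Dt hsym a x)) := by
  have h1 : phi16 I hsym a (temb I b) = DM16.mk (b = a) (I a b) :=
    Con.lift_mk' _ _
  simp only [Dt, map_mul, h1]
  exact Iff.rfl

lemma tle_of_Dt (hsym : Symmetric I) {a : S} : ∀ x : TraceMonoid I, Dt hsym a x → tle I (temb I a) x := by
  intro x
  refine Con.induction_on x ?_
  intro w
  induction w using FreeMonoid.inductionOn' with
  | one =>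
    intro hd
    rw [show ((1 : FreeMonoid S) : TraceMonoid I) = (1 : TraceMonoid I) from
      map_one (tproj I)] at hd
    exact absurd hd (Dt_one hsym a)
  | of_mul b w ih =>
    intro hd
    have hd' : Dt hsym a (temb I b * (tproj I w)) := hd
    rcases (Dt_temb_mul hsym a b (tproj I w)).mp hd' with rfl | ⟨hab, hdw⟩
    · exact ⟨tproj I w, map_mul (tproj I) _ _⟩
    · obtain ⟨z, hz⟩ := ih hdw
      have hz' : tproj I w = temb I a * z := hz
      refine ⟨temb I b * z, ?_⟩
      calc (tproj I (FreeMonoid.of b * w)) = temb I b * tproj I w :=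
            map_mul (tproj I) _ _
        _ = temb I b * (temb I a * z) := by rw [hz']
        _ = (temb I b * temb I a) * z := (mul_assoc _ _ _).symm
        _ = (temb I a * temb I b) * z := by rw [← (temb_commute hab).eq]
        _ = temb I a * (temb I b * z) := mul_assoc _ _ _

lemma tle_temb_iff (hsym : Symmetric I) (a : S) (x : TraceMonoid I) :
    tle I (temb I a) x ↔ Dt hsym a x := by
  constructor
  · rintro ⟨z, rfl⟩
    exact (Dt_temb_mul hsym a a z).mpr (Or.inl rfl)
  · exact tle_of_Dt hsym x

lemma tle_trans16 {x y z : TraceMonoid I} (h1 : tle I x y) (h2 : tle I y z) :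
    tle I x z := by
  obtain ⟨u, rfl⟩ := h1
  obtain ⟨v, rfl⟩ := h2
  exact ⟨u * v, mul_assoc _ _ _⟩

lemma isClique_subset {s t : Finset S} (h : IsClique I s) (hts : t ⊆ s) :
    IsClique I t :=
  Set.Pairwise.mono (Finset.coe_subset.mpr hts) h

lemma cprod_eq_of_eq {c d : Clique I} (h : c.1 = d.1) : cprod I c = cprod I d := by
  have : c = d := Subtype.ext h
  rw [this]

lemma cprod_insert (a : S) (c : Clique I)
    (h : IsClique I (insert a c.1)) (ha : a ∉ c.1) :
    cprod I ⟨insert a c.1, h⟩ = temb I a * cprod I c := by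
  have := Finset.noncommProd_insert_of_notMem c.1 a (temb I)
    (fun x hx y hy hxy => temb_commute (h hx hy hxy)) ha
  exact this

lemma letter_tle_cprod {a : S} {c : Clique I} (ha : a ∈ c.1) :
    tle I (temb I a) (cprod I c) := by
  set c' : Clique I := ⟨c.1.erase a, isClique_subset c.2 (Finset.erase_subset _ _)⟩
    with hc'
  have hins : insert a c'.1 = c.1 := Finset.insert_erase ha
  have hcl : IsClique I (insert a c'.1) := by rw [hins]; exact c.2
  have h1 : cprod I c = cprod I ⟨insert a c'.1, hcl⟩ :=
    cprod_eq_of_eq hins.symm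
  rw [h1, cprod_insert a c' hcl (Finset.notMem_erase _ _)]
  exact ⟨cprod I c', rfl⟩

lemma clique_tle (hsym : Symmetric I) (s : Finset S) :
    ∀ (hs : IsClique I s) (z : TraceMonoid I),
      (∀ a ∈ s, tle I (temb I a) z) → tle I (cprod I ⟨s, hs⟩) z := by
  induction s using Finset.induction_on with
  | empty =>
    intro hs z _
    have h1 : cprod I ⟨(∅ : Finset S), hs⟩ = 1 := Finset.noncommProd_empty _ _
    rw [h1]
    exact ⟨z, (one_mul z).symm⟩
  | @insert a s ha ih =>
    intro hs z hz
    have hs' : IsClique I s := isClique_subset hs (Finset.subset_insert _ _)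
    obtain ⟨w, hw⟩ := hz a (Finset.mem_insert_self a s)
    have hstep : ∀ b ∈ s, tle I (temb I b) w := by
      intro b hb
      have hba : a ≠ b := fun hab => ha (hab ▸ hb)
      have hdb : Dt hsym b z := (tle_temb_iff hsym b z).mp (hz b (Finset.mem_insert_of_mem hb))
      rw [hw] at hdb
      rcases (Dt_temb_mul hsym b a w).mp hdb with hab | ⟨_, hdw⟩
      · exact absurd hab hba
      · exact (tle_temb_iff hsym b w).mpr hdw
    obtain ⟨u, hu⟩ := ih hs' w hstep
    refine ⟨u, ?_⟩
    rw [cprod_insert a ⟨s, hs'⟩ hs ha, hw, hu, mul_assoc]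

end Stmt16Aux

open scoped Classical in
open TraceDoc in
/-- In a deterministic concurrent system with all `Σ_α` nonempty, the dominant
valuation is probabilistic: the Möbius transform `h_α` takes value `1` on the
maximum clique `c_α = Σ_α` and `0` on every other enabled clique. -/
theorem stmt16 {S X : Type*} [Fintype S] [Fintype X]
    (I : S → S → Prop) (hsym : Symmetric I) (hirr : ∀ a, ¬ I a a)
    (C : ConcurrentSystem I X)
    (hdet : ∀ (α : X) (x y : TraceMonoid I), x ∈ C.execs α → y ∈ C.execs α →
      ∃ z ∈ C.execs α, tle I x z ∧ tle I y z)
    (hne : ∀ α : X, ∃ a : S, temb I a ∈ C.execs α)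
    (h : X → Clique I → ℤ)
    (hh : ∀ (α : X) (c : Clique I),
      h α c = ∑ c' ∈ Finset.univ.filter
          (fun c' : Clique I => cprod I c' ∈ C.execs α ∧ c.1 ⊆ c'.1),
        (-1 : ℤ) ^ (c'.1.card - c.1.card)) :
    ∀ α : X, ∃ cα : Clique I,
      cα.1 = Finset.univ.filter (fun a : S => temb I a ∈ C.execs α) ∧
      cprod I cα ∈ C.execs α ∧ h α cα = 1 ∧
      ∀ c : Clique I, cprod I c ∈ C.execs α → c ≠ cα → h α c = 0 := by
  intro α
  have h1mem : (1 : TraceMonoid I) ∈ C.execs α := by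
    show C.act (some α) 1 ≠ none
    rw [C.act_one]
    exact fun hx => Option.some_ne_none α hx
  have div_enabled : ∀ {x y : TraceMonoid I}, tle I x y → y ∈ C.execs α →
      x ∈ C.execs α := by
    rintro x y ⟨z, rfl⟩ hy hx
    exact hy (by rw [C.act_mul, hx, C.act_bot])
  -- an enabled common upper bound for any finite set of enabled letters
  have ub : ∀ s : Finset S, (∀ a ∈ s, temb I a ∈ C.execs α) →
      ∃ z ∈ C.execs α, ∀ a ∈ s, tle I (temb I a) z := by
    intro s
    induction s using Finset.induction_on with
    | empty => exact fun _ => ⟨1, h1mem, fun a ha => absurd ha (Finset.notMem_empty a)⟩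
    | @insert a s ha ih =>
      intro hmem
      obtain ⟨z, hz, hzub⟩ := ih (fun b hb => hmem b (Finset.mem_insert_of_mem hb))
      obtain ⟨z', hz', hle1, hle2⟩ := hdet α z (temb I a) hz
        (hmem a (Finset.mem_insert_self a s))
      refine ⟨z', hz', ?_⟩
      intro b hb
      rcases Finset.mem_insert.mp hb with rfl | hb'
      · exact hle2
      · exact tle_trans16 (hzub b hb') hle1
  set Sal : Finset S := Finset.univ.filter (fun a : S => temb I a ∈ C.execs α)
    with hSal
  have hSmem : ∀ a ∈ Sal, temb I a ∈ C.execs α := by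
    intro a ha
    exact (Finset.mem_filter.mp ha).2
  obtain ⟨z, hz, hzub⟩ := ub Sal hSmem
  have hclique : IsClique I Sal := by
    intro a ha b hb hab
    obtain ⟨u, hu⟩ := hzub a (Finset.mem_coe.mp ha)
    have hdb : Dt hsym b z := (tle_temb_iff hsym b z).mp (hzub b (Finset.mem_coe.mp hb))
    rw [hu] at hdb
    rcases (Dt_temb_mul hsym b a u).mp hdb with hba | ⟨hIba, _⟩
    · exact absurd hba hab
    · exact hsym hIba
  set cα : Clique I := ⟨Sal, hclique⟩ with hcα
  have hcα_en : cprod I cα ∈ C.execs α :=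
    div_enabled (clique_tle hsym Sal hclique z hzub) hz
  have key : ∀ c : Clique I, cprod I c ∈ C.execs α ↔ c.1 ⊆ Sal := by
    intro c
    constructor
    · intro hc a hac
      exact Finset.mem_filter.mpr ⟨Finset.mem_univ a,
        div_enabled (letter_tle_cprod hac) hc⟩
    · intro hsub
      have : tle I (cprod I ⟨c.1, c.2⟩) z :=
        clique_tle hsym c.1 c.2 z (fun a hac => hzub a (hsub hac))
      exact div_enabled this hz
  have hmob : ∀ c : Clique I, c.1 ⊆ Sal →
      h α c = if c.1 = Sal then 1 else 0 := by
    intro c hsub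
    rw [hh α c]
    have hfeq : (Finset.univ.filter
        (fun c' : Clique I => cprod I c' ∈ C.execs α ∧ c.1 ⊆ c'.1)) =
        (Finset.univ.filter (fun c' : Clique I => c'.1 ⊆ Sal ∧ c.1 ⊆ c'.1)) := by
      apply Finset.filter_congr
      intro c' _
      rw [key c']
    rw [hfeq]
    have hbij : ∑ c' ∈ Finset.univ.filter
          (fun c' : Clique I => c'.1 ⊆ Sal ∧ c.1 ⊆ c'.1),
          (-1 : ℤ) ^ (c'.1.card - c.1.card)
        = ∑ t ∈ (Sal \ c.1).powerset, (-1 : ℤ) ^ t.card := by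
      refine Finset.sum_bij' (fun c' _ => c'.1 \ c.1)
        (fun t ht => (⟨c.1 ∪ t, ?_⟩ : Clique I)) ?_ ?_ ?_ ?_ ?_
      · refine isClique_subset hclique ?_
        refine Finset.union_subset hsub ?_
        exact (Finset.mem_powerset.mp ht).trans (Finset.sdiff_subset)
      · intro c' hc'
        obtain ⟨h1, h2⟩ := (Finset.mem_filter.mp hc').2
        exact Finset.mem_powerset.mpr (Finset.sdiff_subset_sdiff h1 (le_refl _))
      · intro t ht
        refine Finset.mem_filter.mpr ⟨Finset.mem_univ _, ?_, Finset.subset_union_left⟩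
        exact Finset.union_subset hsub
          ((Finset.mem_powerset.mp ht).trans Finset.sdiff_subset)
      · intro c' hc'
        obtain ⟨h1, h2⟩ := (Finset.mem_filter.mp hc').2
        exact Subtype.ext (Finset.union_sdiff_of_subset h2)
      · intro t ht
        have hdisj : Disjoint c.1 t :=
          Finset.disjoint_left.mpr (fun x hx hxt =>
            (Finset.mem_sdiff.mp ((Finset.mem_powerset.mp ht) hxt)).2 hx)
        exact Finset.union_sdiff_cancel_left hdisj
      · intro c' hc'
        obtain ⟨h1, h2⟩ := (Finset.mem_filter.mp hc').2
        rw [Finset.card_sdiff_of_subset h2]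
    rw [hbij, Finset.sum_powerset_neg_one_pow_card]
    have hiff : (Sal \ c.1 = ∅) ↔ (c.1 = Sal) := by
      rw [Finset.sdiff_eq_empty_iff_subset]
      exact ⟨fun h12 => Finset.Subset.antisymm hsub h12, fun h12 => h12 ▸ le_refl _⟩
    rw [if_congr hiff rfl rfl]
  refine ⟨cα, rfl, hcα_en, ?_, ?_⟩
  · rw [hmob cα (le_refl _), if_pos rfl]
  · intro c hc hne'
    rw [hmob c ((key c).mp hc), if_neg (fun h' => hne' (Subtype.ext h'))]
end
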